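/- arXiv:2403.15599 — 6 statements merged into one kernel-verified Lean document; each statement's English description precedes it below -/
import Mathlib

section
/- Let k ≥ 1 and let G₁ and G₂ be two vertex-disjoint bipartite k-connected subgraphs of a graph G. Suppose there is a set F of at least 2k−1 pairwise vertex-disjoint edges of G, each having one endpoint in V(G₁) and one endpoint in V(G₂). Then there exist k edges of F such that the graph formed by the union of G₁ and G₂ together with these k edges is bipartite and k-connected. -/
def IsKConnected {V : Type*} (G : SimpleGraph V) (k : ℕ) : Prop :=
  k + 1 ≤ Nat.card V ∧ ∀ S : Set V, S.ncard < k → (G.induce Sᶜ).Connected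

lemma exists_unhit {V : Type} [Nonempty V] (F' : Set (Sym2 V)) (S' : Set V)
    (hdisj : F'.Pairwise fun e f => ∀ v, v ∈ e → v ∉ f)
    (hS'fin : S'.Finite)
    (hcard : S'.ncard < F'.ncard) :
    ∃ e ∈ F', ∀ v ∈ S', v ∉ e := by
  classical
  by_contra h
  push_neg at h
  have h' : ∀ e ∈ F', ∃ v ∈ S', v ∈ e := by
    intro e he
    obtain ⟨v, hv1, hv2⟩ := h e he
    exact ⟨v, hv1, hv2⟩
  have : F'.ncard ≤ S'.ncard := by
    refine Set.ncard_le_ncard_of_injOn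
      (fun e => if he : ∃ v ∈ S', v ∈ e then he.choose else Classical.arbitrary V) ?_ ?_ hS'fin
    · intro e he
      have hex := h' e he
      simp only [dif_pos hex]
      exact hex.choose_spec.1
    · intro e he f hf hef
      by_contra hne
      have hexe := h' e he
      have hexf := h' f hf
      simp only [dif_pos hexe, dif_pos hexf] at hef
      have hve : hexe.choose ∈ e := hexe.choose_spec.2
      have hvf : hexf.choose ∈ f := hexf.choose_spec.2
      rw [hef] at hve
      exact hdisj he hf hne _ hve hvf
  omega

/-- If `G₁, G₂` are vertex-disjoint bipartite `k`-connected subgraphs of `G` and `F`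
is a set of at least `2k-1` pairwise vertex-disjoint edges of `G`, each with one
endpoint in `G₁` and one in `G₂`, then some `k` edges of `F` can be added to the
union of `G₁` and `G₂` so that the resulting subgraph is bipartite and `k`-connected. -/
theorem union_of_bipartite_connected_subgraphs (V : Type) [Fintype V] (G : SimpleGraph V)
    (k : ℕ) (hk : 1 ≤ k) (G₁ G₂ : G.Subgraph)
    (hdisj : Disjoint G₁.verts G₂.verts)
    (h1b : G₁.coe.Colorable 2) (h1c : IsKConnected G₁.coe k)
    (h2b : G₂.coe.Colorable 2) (h2c : IsKConnected G₂.coe k)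
    (F : Set (Sym2 V)) (hFG : F ⊆ G.edgeSet)
    (hFcard : 2 * k - 1 ≤ F.ncard)
    (hFcross : ∀ e ∈ F, ∃ a b, e = s(a, b) ∧ a ∈ G₁.verts ∧ b ∈ G₂.verts)
    (hFdisj : F.Pairwise fun e f => ∀ v, v ∈ e → v ∉ f) :
    ∃ F' ⊆ F, F'.ncard = k ∧
      ∃ H : G.Subgraph, H.verts = G₁.verts ∪ G₂.verts ∧
        H.edgeSet = G₁.edgeSet ∪ G₂.edgeSet ∪ F' ∧
        H.coe.Colorable 2 ∧ IsKConnected H.coe k := by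
  classical
  obtain ⟨hc1, hconn1⟩ := h1c
  obtain ⟨hc2, hconn2⟩ := h2c
  obtain ⟨C₁⟩ := h1b
  obtain ⟨C₂⟩ := h2b
  -- V is nonempty
  have hne1 : Nonempty ↑G₁.verts := by
    have : 0 < Nat.card ↑G₁.verts := lt_of_lt_of_le (by omega) hc1
    exact (Nat.card_pos_iff.mp this).1
  have hneV : Nonempty V := ⟨↑(Classical.arbitrary ↑G₁.verts)⟩
  -- disjointness as membership
  have hdisj' : ∀ v : V, v ∈ G₂.verts → v ∉ G₁.verts := by
    intro v hv2 hv1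
    exact Set.disjoint_left.mp hdisj hv1 hv2
  -- choose endpoints for each edge
  have hcross' : ∀ e : Sym2 V, ∃ a b, e ∈ F → e = s(a, b) ∧ a ∈ G₁.verts ∧ b ∈ G₂.verts := by
    intro e
    by_cases he : e ∈ F
    · obtain ⟨a, b, h⟩ := hFcross e he; exact ⟨a, b, fun _ => h⟩
    · exact ⟨Classical.arbitrary V, Classical.arbitrary V, fun h => absurd h he⟩
  choose A B hABspec using hcross'
  have hAB : ∀ e ∈ F, e = s(A e, B e) := fun e he => (hABspec e he).1
  have hA : ∀ e ∈ F, A e ∈ G₁.verts := fun e he => (hABspec e he).2.1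
  have hB : ∀ e ∈ F, B e ∈ G₂.verts := fun e he => (hABspec e he).2.2
  -- total colorings
  set c1 : V → Fin 2 := fun v => if h : v ∈ G₁.verts then C₁ ⟨v, h⟩ else 0 with hc1def
  set c2 : V → Fin 2 := fun v => if h : v ∈ G₂.verts then C₂ ⟨v, h⟩ else 0 with hc2def
  have hc1valid : ∀ x y, G₁.Adj x y → c1 x ≠ c1 y := by
    intro x y hxy
    have hx := G₁.edge_vert hxy
    have hy := G₁.edge_vert hxy.symm
    simp only [hc1def, dif_pos hx, dif_pos hy]
    exact C₁.valid ((SimpleGraph.Subgraph.coe_adj G₁ ⟨x, hx⟩ ⟨y, hy⟩).mpr hxy)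
  have hc2valid : ∀ x y, G₂.Adj x y → c2 x ≠ c2 y := by
    intro x y hxy
    have hx := G₂.edge_vert hxy
    have hy := G₂.edge_vert hxy.symm
    simp only [hc2def, dif_pos hx, dif_pos hy]
    exact C₂.valid ((SimpleGraph.Subgraph.coe_adj G₂ ⟨x, hx⟩ ⟨y, hy⟩).mpr hxy)
  -- pigeonhole: choose a good class and a color twist σ
  obtain ⟨Fg, hFgF, hFgcard, σ, hσinj, hσ⟩ :
      ∃ Fg ⊆ F, k ≤ Fg.ncard ∧ ∃ σ : Fin 2 → Fin 2, Function.Injective σ ∧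
        ∀ e ∈ Fg, c1 (A e) ≠ σ (c2 (B e)) := by
    set F₀ : Set (Sym2 V) := {e ∈ F | c1 (A e) ≠ c2 (B e)} with hF0
    set F₁ : Set (Sym2 V) := {e ∈ F | c1 (A e) = c2 (B e)} with hF1
    have hunion : F₀ ∪ F₁ = F := by
      ext e
      simp only [hF0, hF1, Set.mem_union, Set.mem_setOf_eq]
      tauto
    have hd : Disjoint F₀ F₁ := by
      rw [Set.disjoint_left]
      rintro e ⟨_, h1⟩ ⟨_, h2⟩
      exact h1 h2
    have hsum : F₀.ncard + F₁.ncard = F.ncard := by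
      rw [← Set.ncard_union_eq hd (Set.toFinite _) (Set.toFinite _), hunion]
    have hcase : k ≤ F₀.ncard ∨ k ≤ F₁.ncard := by omega
    rcases hcase with hcase | hcase
    · exact ⟨F₀, fun e he => he.1, hcase, id, Function.injective_id,
        fun e he => he.2⟩
    · refine ⟨F₁, fun e he => he.1, hcase, fun x => x + 1, by decide, ?_⟩
      intro e he
      rw [he.2]
      generalize c2 (B e) = x
      revert x
      decide
  obtain ⟨F', hF'Fg, hF'card⟩ := Set.exists_subset_card_eq (s := Fg) hFgcard
  have hF'F : F' ⊆ F := hF'Fg.trans hFgF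
  refine ⟨F', hF'F, hF'card, ?_⟩
  -- build the subgraph H
  have hF'endpts : ∀ x y : V, s(x, y) ∈ F' →
      (x = A s(x, y) ∧ y = B s(x, y)) ∨ (x = B s(x, y) ∧ y = A s(x, y)) := by
    intro x y hxy
    have := hAB _ (hF'F hxy)
    rw [Sym2.eq_iff] at this
    tauto
  let H : G.Subgraph :=
    { verts := G₁.verts ∪ G₂.verts
      Adj := fun x y => G₁.Adj x y ∨ G₂.Adj x y ∨ s(x, y) ∈ F'
      adj_sub := by
        rintro x y (h | h | h)
        · exact G₁.adj_sub h
        · exact G₂.adj_sub h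
        · exact (SimpleGraph.mem_edgeSet G).mp (hFG (hF'F h))
      edge_vert := by
        rintro x y (h | h | h)
        · exact Or.inl (G₁.edge_vert h)
        · exact Or.inr (G₂.edge_vert h)
        · rcases hF'endpts x y h with ⟨hx, _⟩ | ⟨hx, _⟩
          · exact Or.inl (hx ▸ hA _ (hF'F h))
          · exact Or.inr (hx ▸ hB _ (hF'F h))
      symm := by
        constructor
        rintro x y (h | h | h)
        · exact Or.inl h.symm
        · exact Or.inr (Or.inl h.symm)
        · exact Or.inr (Or.inr (Sym2.eq_swap ▸ h)) }
  have hHverts : H.verts = G₁.verts ∪ G₂.verts := rfl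
  have hHadj : ∀ x y : V, H.Adj x y ↔ (G₁.Adj x y ∨ G₂.Adj x y ∨ s(x, y) ∈ F') :=
    fun x y => Iff.rfl
  refine ⟨H, hHverts, ?_, ?_, ?_⟩
  -- edge set
  · ext e
    induction e with
    | _ x y =>
      simp only [SimpleGraph.Subgraph.mem_edgeSet, Set.mem_union]
      exact or_assoc.symm
  -- colorability
  · refine ⟨SimpleGraph.Coloring.mk
      (fun v => if (↑v : V) ∈ G₁.verts then c1 ↑v else σ (c2 ↑v)) ?_⟩
    rintro ⟨u, hu⟩ ⟨v, hv⟩ hadj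
    rw [SimpleGraph.Subgraph.coe_adj] at hadj
    rcases hadj with h | h | h
    · have hu1 := G₁.edge_vert h
      have hv1 := G₁.edge_vert h.symm
      simp only [if_pos hu1, if_pos hv1]
      exact hc1valid u v h
    · have hu2 := G₂.edge_vert h
      have hv2 := G₂.edge_vert h.symm
      simp only [if_neg (hdisj' u hu2), if_neg (hdisj' v hv2)]
      intro hcon
      exact hc2valid u v h (hσinj hcon)
    · show (if u ∈ G₁.verts then c1 u else σ (c2 u)) ≠
        (if v ∈ G₁.verts then c1 v else σ (c2 v))
      have hcases : (∃ e ∈ F', u = A e ∧ v = B e) ∨ (∃ e ∈ F', u = B e ∧ v = A e) := by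
        rcases hF'endpts u v h with ⟨hx, hy⟩ | ⟨hx, hy⟩
        · exact Or.inl ⟨s(u, v), h, hx, hy⟩
        · exact Or.inr ⟨s(u, v), h, hx, hy⟩
      rcases hcases with ⟨e, he, hx, hy⟩ | ⟨e, he, hx, hy⟩
      · have hu1 : u ∈ G₁.verts := by rw [hx]; exact hA _ (hF'F he)
        have hv2 : v ∈ G₂.verts := by rw [hy]; exact hB _ (hF'F he)
        rw [if_pos hu1, if_neg (hdisj' v hv2), hx, hy]
        exact hσ _ (hF'Fg he)
      · have hu2 : u ∈ G₂.verts := by rw [hx]; exact hB _ (hF'F he)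
        have hv1 : v ∈ G₁.verts := by rw [hy]; exact hA _ (hF'F he)
        rw [if_neg (hdisj' u hu2), if_pos hv1, hx, hy]
        exact fun hcon => hσ _ (hF'Fg he) hcon.symm
  -- k-connectivity
  · have hHcard : k + 1 ≤ Nat.card ↑H.verts := by
      have hc : Nat.card ↑H.verts = (G₁.verts ∪ G₂.verts).ncard := by
        rw [Nat.card_coe_set_eq]
      rw [hc, Set.ncard_union_eq hdisj (Set.toFinite _) (Set.toFinite _)]
      have e1 : k + 1 ≤ G₁.verts.ncard := by rw [← Nat.card_coe_set_eq]; exact hc1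
      have e2 : k + 1 ≤ G₂.verts.ncard := by rw [← Nat.card_coe_set_eq]; exact hc2
      omega
    refine ⟨hHcard, ?_⟩
    intro S hS
    -- the vertices of S, viewed in V
    set S' : Set V := Subtype.val '' S with hS'def
    have hS'card : S'.ncard = S.ncard := Set.ncard_image_of_injective S Subtype.val_injective
    -- the trace of S on G₁ and G₂
    set T₁ : Set ↑G₁.verts := {v | ∃ hv : (↑v : V) ∈ H.verts, (⟨↑v, hv⟩ : ↑H.verts) ∈ S} with hT₁def
    set T₂ : Set ↑G₂.verts := {v | ∃ hv : (↑v : V) ∈ H.verts, (⟨↑v, hv⟩ : ↑H.verts) ∈ S} with hT₂def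
    have hT₁card : T₁.ncard < k := by
      have hle : T₁.ncard ≤ S.ncard := by
        refine Set.ncard_le_ncard_of_injOn
          (fun v => (⟨↑v, Set.mem_union_left _ v.2⟩ : ↑H.verts)) ?_ ?_ (Set.toFinite _)
        · rintro v ⟨hv, hvS⟩
          exact hvS
        · intro a _ b _ hab
          simp only [Subtype.mk.injEq] at hab
          exact Subtype.ext hab
      omega
    have hT₂card : T₂.ncard < k := by
      have hle : T₂.ncard ≤ S.ncard := by
        refine Set.ncard_le_ncard_of_injOn
          (fun v => (⟨↑v, Set.mem_union_right _ v.2⟩ : ↑H.verts)) ?_ ?_ (Set.toFinite _)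
        · rintro v ⟨hv, hvS⟩
          exact hvS
        · intro a _ b _ hab
          simp only [Subtype.mk.injEq] at hab
          exact Subtype.ext hab
      omega
    -- homomorphisms from the induced pieces into the induced union
    let φ₁ : (G₁.coe.induce T₁ᶜ) →g (H.coe.induce Sᶜ) :=
      { toFun := fun w => ⟨⟨↑↑w, Set.mem_union_left _ (↑w : ↑G₁.verts).2⟩,
          fun hmem => w.2 ⟨Set.mem_union_left _ (↑w : ↑G₁.verts).2, hmem⟩⟩
        map_rel' := by
          intro a b hab
          simp only [SimpleGraph.comap_adj, Function.Embedding.coe_subtype,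
            SimpleGraph.Subgraph.coe_adj] at hab ⊢
          exact Or.inl hab }
    let φ₂ : (G₂.coe.induce T₂ᶜ) →g (H.coe.induce Sᶜ) :=
      { toFun := fun w => ⟨⟨↑↑w, Set.mem_union_right _ (↑w : ↑G₂.verts).2⟩,
          fun hmem => w.2 ⟨Set.mem_union_right _ (↑w : ↑G₂.verts).2, hmem⟩⟩
        map_rel' := by
          intro a b hab
          simp only [SimpleGraph.comap_adj, Function.Embedding.coe_subtype,
            SimpleGraph.Subgraph.coe_adj] at hab ⊢
          exact Or.inr (Or.inl hab) }
    have key₁ : ∀ (u v : ↑(Sᶜ)) (hu : (↑↑u : V) ∈ G₁.verts) (hv : (↑↑v : V) ∈ G₁.verts),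
        (H.coe.induce Sᶜ).Reachable u v := by
      intro u v hu hv
      have hu' : (⟨↑↑u, hu⟩ : ↑G₁.verts) ∈ T₁ᶜ := fun hmem => u.2 hmem.2
      have hv' : (⟨↑↑v, hv⟩ : ↑G₁.verts) ∈ T₁ᶜ := fun hmem => v.2 hmem.2
      have hr := ((hconn1 T₁ hT₁card).preconnected ⟨⟨↑↑u, hu⟩, hu'⟩ ⟨⟨↑↑v, hv⟩, hv'⟩).map φ₁
      have h1 : φ₁ ⟨⟨↑↑u, hu⟩, hu'⟩ = u := Subtype.ext (Subtype.ext rfl)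
      have h2 : φ₁ ⟨⟨↑↑v, hv⟩, hv'⟩ = v := Subtype.ext (Subtype.ext rfl)
      rwa [h1, h2] at hr
    have key₂ : ∀ (u v : ↑(Sᶜ)) (hu : (↑↑u : V) ∈ G₂.verts) (hv : (↑↑v : V) ∈ G₂.verts),
        (H.coe.induce Sᶜ).Reachable u v := by
      intro u v hu hv
      have hu' : (⟨↑↑u, hu⟩ : ↑G₂.verts) ∈ T₂ᶜ := fun hmem => u.2 hmem.2
      have hv' : (⟨↑↑v, hv⟩ : ↑G₂.verts) ∈ T₂ᶜ := fun hmem => v.2 hmem.2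
      have hr := ((hconn2 T₂ hT₂card).preconnected ⟨⟨↑↑u, hu⟩, hu'⟩ ⟨⟨↑↑v, hv⟩, hv'⟩).map φ₂
      have h1 : φ₂ ⟨⟨↑↑u, hu⟩, hu'⟩ = u := Subtype.ext (Subtype.ext rfl)
      have h2 : φ₂ ⟨⟨↑↑v, hv⟩, hv'⟩ = v := Subtype.ext (Subtype.ext rfl)
      rwa [h1, h2] at hr
    -- a surviving edge of F'
    obtain ⟨e, heF', hemiss⟩ : ∃ e ∈ F', ∀ v ∈ S', v ∉ e := by
      apply exists_unhit F' S' (hFdisj.mono hF'F) (Set.toFinite _)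
      rw [hS'card, hF'card]
      exact hS
    have hae : A e ∈ G₁.verts := hA _ (hF'F heF')
    have hbe : B e ∈ G₂.verts := hB _ (hF'F heF')
    obtain ⟨a', b', h2, ha', hb'⟩ : ∃ a' b', e = s(a', b') ∧ a' = A e ∧ b' = B e :=
      ⟨_, _, hAB e (hF'F heF'), rfl, rfl⟩
    have haE : A e ∈ e := by
      rw [← ha', h2]
      exact Sym2.mem_mk_left _ _
    have hbE : B e ∈ e := by
      rw [← hb', h2]
      exact Sym2.mem_mk_right _ _
    have haS : (⟨A e, Set.mem_union_left _ hae⟩ : ↑H.verts) ∉ S := by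
      intro hmem
      exact hemiss (A e) ⟨⟨A e, Set.mem_union_left _ hae⟩, hmem, rfl⟩ haE
    have hbS : (⟨B e, Set.mem_union_right _ hbe⟩ : ↑H.verts) ∉ S := by
      intro hmem
      exact hemiss (B e) ⟨⟨B e, Set.mem_union_right _ hbe⟩, hmem, rfl⟩ hbE
    set ua : ↑(Sᶜ) := ⟨⟨A e, Set.mem_union_left _ hae⟩, haS⟩ with hua
    set ub : ↑(Sᶜ) := ⟨⟨B e, Set.mem_union_right _ hbe⟩, hbS⟩ with hub
    have hadj : (H.coe.induce Sᶜ).Adj ua ub :=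
      Or.inr (Or.inr ((hAB e (hF'F heF')) ▸ heF'))
    -- nonemptiness
    have hSne : (Sᶜ : Set ↑H.verts).Nonempty := by
      rw [Set.nonempty_compl]
      intro hSuniv
      have huniv : (Set.univ : Set ↑H.verts).ncard = Nat.card ↑H.verts := Set.ncard_univ _
      rw [hSuniv, huniv] at hS
      omega
    haveI : Nonempty ↑(Sᶜ : Set ↑H.verts) := hSne.to_subtype
    refine ⟨?_⟩
    intro u v
    rcases u.1.2 with hu | hu <;> rcases v.1.2 with hv | hv
    · exact key₁ u v hu hv
    · exact (key₁ u ua hu hae).trans (hadj.reachable.trans (key₂ ub v hbe hv))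
    · exact (key₂ u ub hu hbe).trans (hadj.symm.reachable.trans (key₁ ua v hae hv))
    · exact key₂ u v hu hv
end

section
/- Every 3-connected graph on n ≥ 5 vertices contains a spanning bipartite 2-connected subgraph. (This is the upper bound f(2,n) ≤ 3 for n ≥ 5.) -/
open SimpleGraph

variable {V : Type*}

/-- Connectivity of `H` within a vertex set `T`, phrased via walks. -/
def ConnOn (H : SimpleGraph V) (T : Set V) : Prop :=
  T.Nonempty ∧ ∀ a ∈ T, ∀ b ∈ T, ∃ w : H.Walk a b, ∀ y ∈ w.support, y ∈ T

lemma reachable_induce_of_walk (H : SimpleGraph V) (T : Set V) {a b : V}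
    (w : H.Walk a b) (hw : ∀ y ∈ w.support, y ∈ T) (ha : a ∈ T) (hb : b ∈ T) :
    (H.induce T).Reachable ⟨a, ha⟩ ⟨b, hb⟩ := by
  induction w with
  | nil => exact Reachable.refl _
  | @cons u c v h p ih =>
      have hc : c ∈ T := hw c (by simp [SimpleGraph.Walk.support_cons])
      have : (H.induce T).Adj ⟨u, ha⟩ ⟨c, hc⟩ := h
      exact (Adj.reachable this).trans
        (ih (fun y hy => hw y (by simp [SimpleGraph.Walk.support_cons, hy])) hc hb)

lemma induce_connected_of_connOn {H : SimpleGraph V} {T : Set V}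
    (h : ConnOn H T) : (H.induce T).Connected := by
  obtain ⟨⟨t0, ht0⟩, hww⟩ := h
  have : Nonempty (T : Set V) := ⟨⟨t0, ht0⟩⟩
  refine SimpleGraph.Connected.mk ?_
  rintro ⟨a, ha⟩ ⟨b, hb⟩
  obtain ⟨w, hw⟩ := hww a ha b hb
  exact reachable_induce_of_walk H T w hw ha hb

lemma connOn_of_induce_connected {H : SimpleGraph V} {T : Set V}
    (h : (H.induce T).Connected) : ConnOn H T := by
  have hne : T.Nonempty := by
    obtain ⟨⟨x, hx⟩⟩ := h.nonempty
    exact ⟨x, hx⟩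
  refine ⟨hne, fun a ha b hb => ?_⟩
  obtain ⟨w⟩ := h.preconnected ⟨a, ha⟩ ⟨b, hb⟩
  refine ⟨(w.map ⟨Subtype.val, fun {x y} hxy => hxy⟩ : H.Walk a b), ?_⟩
  intro y hy
  rw [SimpleGraph.Walk.support_map, List.mem_map] at hy
  obtain ⟨⟨z, hz⟩, _, rfl⟩ := hy
  exact hz

variable {V : Type*} {G : SimpleGraph V}

lemma mem_support_cons_iff {a c b y : V} (h : G.Adj a c) (p : G.Walk c b) :
    y ∈ (Walk.cons h p).support ↔ y = a ∨ y ∈ p.support := by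
  rw [Walk.support_cons, List.mem_cons]

/-- First hit of a set: a prefix path ending at the first vertex of `S`. -/
lemma exists_prefix_to_set (S : Set V) :
    ∀ {a b : V} (w : G.Walk a b), a ∉ S → b ∈ S →
    ∃ (u : V) (p : G.Walk a u), u ∈ S ∧ (∀ y ∈ p.support, y ∈ w.support) ∧
      (∀ y ∈ p.support, y ≠ u → y ∉ S) ∧ (w.IsPath → p.IsPath) := by
  intro a b w
  induction w with
  | nil => intro ha hb; exact absurd hb ha
  | @cons a c b h p ih =>
      intro ha hb
      by_cases hc : c ∈ S
      · refine ⟨c, Walk.cons h Walk.nil, hc, ?_, ?_, ?_⟩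
        · intro y hy
          rw [mem_support_cons_iff] at hy ⊢
          rcases hy with hy | hy
          · left; exact hy
          · simp only [Walk.support_nil, List.mem_singleton] at hy
            right; rw [hy]; exact Walk.start_mem_support p
        · intro y hy hyne
          rw [mem_support_cons_iff] at hy
          rcases hy with hy | hy
          · rw [hy]; exact ha
          · simp only [Walk.support_nil, List.mem_singleton] at hy
            exact absurd hy hyne
        · intro _
          rw [Walk.cons_isPath_iff]
          constructor
          · exact Walk.IsPath.nil
          · simp [h.ne]
      · obtain ⟨u, q, hu, hsub, hnotS, hpath⟩ := ih hc hb
        refine ⟨u, Walk.cons h q, hu, ?_, ?_, ?_⟩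
        · intro y hy
          rw [mem_support_cons_iff] at hy ⊢
          rcases hy with hy | hy
          · left; exact hy
          · right; exact hsub y hy
        · intro y hy hyne
          rw [mem_support_cons_iff] at hy
          rcases hy with hy | hy
          · rw [hy]; exact ha
          · exact hnotS y hy hyne
        · intro hw
          rw [Walk.cons_isPath_iff] at hw ⊢
          exact ⟨hpath hw.1, fun hmem => hw.2 (hsub a hmem)⟩

/-- Last hit of a set: a suffix walk starting at the last vertex of `S`. -/
lemma exists_suffix_from_set (S : Set V) :
    ∀ {a b : V} (w : G.Walk a b), b ∉ S → (∃ y ∈ w.support, y ∈ S) →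
    ∃ (z : V) (r : G.Walk z b), z ∈ S ∧ (∀ y ∈ r.support, y ∈ w.support) ∧
      (∀ y ∈ r.support, y ≠ z → y ∉ S) ∧ (w.IsPath → r.IsPath) ∧ 0 < r.length := by
  intro a b w
  induction w with
  | nil =>
      intro hb hex
      obtain ⟨y, hy, hyS⟩ := hex
      simp only [Walk.support_nil, List.mem_singleton] at hy
      subst hy; exact absurd hyS hb
  | @cons a c b h p ih =>
      intro hb hex
      by_cases hc : ∃ y ∈ p.support, y ∈ S
      · obtain ⟨z, r, hz, hsub, hnotS, hpath, hlen⟩ := ih hb hc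
        refine ⟨z, r, hz, ?_, hnotS, ?_, hlen⟩
        · intro y hy
          rw [mem_support_cons_iff]
          right; exact hsub y hy
        · intro hw; exact hpath (((Walk.cons_isPath_iff h p).mp hw).1)
      · obtain ⟨y, hy, hyS⟩ := hex
        rw [mem_support_cons_iff] at hy
        have hya : y = a := by
          rcases hy with h1 | h1
          · exact h1
          · exact absurd ⟨y, h1, hyS⟩ hc
        subst hya
        refine ⟨y, Walk.cons h p, hyS, fun z hz => hz, ?_, fun hw => hw, by simp⟩
        intro x hx hxne
        rw [mem_support_cons_iff] at hx
        rcases hx with h1 | h1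
        · exact absurd h1 hxne
        · intro hxS; exact hc ⟨x, h1, hxS⟩

variable {V : Type*} [DecidableEq V] {G : SimpleGraph V}

lemma takeUntil_cons {u v w c : V} (h : G.Adj u v) (p : G.Walk v w)
    (hc : c ∈ p.support) (hne : u ≠ c) :
    (Walk.cons h p).takeUntil c (by rw [Walk.support_cons]; exact List.mem_cons_of_mem _ hc)
      = Walk.cons h (p.takeUntil c hc) := by
  simp [Walk.takeUntil, hne]

/-- Junction criterion for an appended walk being a path. -/
lemma isPath_append' {a z b : V} {p : G.Walk a z} {q : G.Walk z b}
    (hp : p.IsPath) (hq : q.IsPath)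
    (h : ∀ y, y ∈ p.support → y ∈ q.support → y = z) : (p.append q).IsPath := by
  rw [Walk.isPath_def _, Walk.support_append]
  apply List.Nodup.append (((Walk.isPath_def _).mp hp)) (List.Nodup.of_cons (by
    rw [← q.support_eq_cons]; exact ((Walk.isPath_def _).mp hq)))
  intro y hy hyt
  have hyq : y ∈ q.support := by
    rw [q.support_eq_cons]; exact List.mem_cons_of_mem _ hyt
  have hyz : y = z := h y hy hyq
  subst hyz
  have : q.support.Nodup := ((Walk.isPath_def _).mp hq)
  rw [q.support_eq_cons] at this
  exact (List.nodup_cons.mp this).1 hyt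

/-- In a path, anything in both the take- and drop-parts equals the split vertex. -/
lemma takeUntil_dropUntil_eq {a b z y : V} {p : G.Walk a b} (hp : p.IsPath)
    (hz : z ∈ p.support) (h1 : y ∈ (p.takeUntil z hz).support)
    (h2 : y ∈ (p.dropUntil z hz).support) : y = z := by
  have hnd : p.support.Nodup := ((Walk.isPath_def _).mp hp)
  rw [← p.take_spec hz, Walk.support_append] at hnd
  have hdisj := List.disjoint_of_nodup_append hnd
  rw [(p.dropUntil z hz).support_eq_cons, List.mem_cons] at h2
  rcases h2 with h2 | h2
  · exact h2
  · exact absurd h2 (hdisj h1)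

/-- The end of a path is in the take-part only if it is the split vertex. -/
lemma end_mem_takeUntil {a b z : V} {p : G.Walk a b} (hp : p.IsPath)
    (hz : z ∈ p.support) (h : b ∈ (p.takeUntil z hz).support) : b = z :=
  takeUntil_dropUntil_eq hp hz h (Walk.end_mem_support _)

/-- The start of a path is in the drop-part only if it is the split vertex. -/
lemma start_mem_dropUntil {a b z : V} {p : G.Walk a b} (hp : p.IsPath)
    (hz : z ∈ p.support) (h : a ∈ (p.dropUntil z hz).support) : a = z :=
  takeUntil_dropUntil_eq hp hz (Walk.start_mem_support _) h

lemma length_takeUntil_add {a b z : V} (p : G.Walk a b) (hz : z ∈ p.support) :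
    (p.takeUntil z hz).length + (p.dropUntil z hz).length = p.length := by
  have := congrArg Walk.length (p.take_spec hz)
  rwa [Walk.length_append] at this

/-- Order on a path: one of two vertices comes before the other. -/
lemma mem_takeUntil_or {a b : V} (w : G.Walk a b) :
    ∀ {c d : V} (hc : c ∈ w.support) (hd : d ∈ w.support), c ≠ d →
    c ∈ (w.takeUntil d hd).support ∨ d ∈ (w.takeUntil c hc).support := by
  induction w with
  | nil =>
      intro c d hc hd hcd
      simp only [Walk.support_nil, List.mem_singleton] at hc hd
      exact absurd (hc.trans hd.symm) hcd
  | @cons a e b h p ih =>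
      intro c d hc hd hcd
      by_cases hca : c = a
      · subst hca
        left; exact Walk.start_mem_support _
      by_cases hda : d = a
      · subst hda
        right; exact Walk.start_mem_support _
      have hc' : c ∈ p.support := by
        rw [Walk.support_cons, List.mem_cons] at hc
        tauto
      have hd' : d ∈ p.support := by
        rw [Walk.support_cons, List.mem_cons] at hd
        tauto
      rcases ih hc' hd' hcd with h1 | h1
      · left
        have := takeUntil_cons h p hd' (fun hh => hda hh.symm)
        have hmem : d ∈ (Walk.cons h p).support := by
          rw [Walk.support_cons]; exact List.mem_cons_of_mem _ hd'
        rw [show (Walk.cons h p).takeUntil d hd = (Walk.cons h p).takeUntil d hmem from rfl, this,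
          Walk.support_cons]
        exact List.mem_cons_of_mem _ h1
      · right
        have := takeUntil_cons h p hc' (fun hh => hca hh.symm)
        have hmem : c ∈ (Walk.cons h p).support := by
          rw [Walk.support_cons]; exact List.mem_cons_of_mem _ hc'
        rw [show (Walk.cons h p).takeUntil c hc = (Walk.cons h p).takeUntil c hmem from rfl, this,
          Walk.support_cons]
        exact List.mem_cons_of_mem _ h1

lemma zmod2_cases (g : ZMod 2) : g = 0 ∨ g = 1 := by revert g; decide
lemma zmod2_ne_iff {g h : ZMod 2} : g ≠ h ↔ g + h = 1 := by revert g h; decide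

/-- Extension of a proper 2-colouring along a parity-compatible ear. -/
lemma extend_coloring [DecidableEq V] (G : SimpleGraph V) :
    ∀ {a b : V} (p : G.Walk a b) (H : SimpleGraph V) (U : Set V) (χ : V → ZMod 2),
    p.IsPath → (∀ x y, H.Adj x y → x ∈ U ∧ y ∈ U) →
    (∀ x y, H.Adj x y → χ x ≠ χ y) →
    (∀ y ∈ p.support, y ≠ a → y ≠ b → y ∉ U) →
    a ∈ U → b ∈ U → (χ a + χ b = (p.length : ZMod 2)) → 0 < p.length →
    ∃ χ' : V → ZMod 2, (∀ y ∈ U, χ' y = χ y) ∧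
      (∀ x y, (H ⊔ fromEdgeSet {e | e ∈ p.edges}).Adj x y → χ' x ≠ χ' y) := by
  intro a b p
  induction p with
  | nil => intro H U χ _ _ _ _ _ _ _ hlen; simp at hlen
  | @cons a c b h p ih =>
      intro H U χ hpath hHU hχ hint ha hb hcompat _
      rcases p with _ | @⟨c, c₂, b, h₂, p₂⟩
      · -- single edge a-b
        refine ⟨χ, fun y _ => rfl, ?_⟩
        intro x y hxy
        rcases hxy with hxy | hxy
        · exact hχ x y hxy
        · rw [fromEdgeSet_adj] at hxy
          obtain ⟨hmem, hne⟩ := hxy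
          simp only [Set.mem_setOf_eq, Walk.edges_cons, Walk.edges_nil,
            List.mem_singleton] at hmem
          rw [Sym2.eq_iff] at hmem
          rcases hmem with ⟨rfl, rfl⟩ | ⟨rfl, rfl⟩
          · rw [zmod2_ne_iff]; simpa using hcompat
          · rw [zmod2_ne_iff, add_comm]; simpa using hcompat
      · -- longer: peel off edge a-c, recurse
        set q : G.Walk c b := Walk.cons h₂ p₂ with hq
        have hqpath : q.IsPath := ((Walk.cons_isPath_iff h q).mp hpath).1
        have hanotq : a ∉ q.support := ((Walk.cons_isPath_iff h q).mp hpath).2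
        have hca : c ≠ a := fun hh => hanotq (hh ▸ Walk.start_mem_support q)
        have hcb : c ≠ b := by
          intro hh
          have h1 : c ∉ p₂.support := ((Walk.cons_isPath_iff h₂ p₂).mp hqpath).2
          exact h1 (hh ▸ Walk.end_mem_support p₂)
        have hcU : c ∉ U := hint c (by
          rw [Walk.support_cons]; exact List.mem_cons_of_mem _ (Walk.start_mem_support q))
          hca hcb
        set H' : SimpleGraph V := H ⊔ fromEdgeSet {s(a, c)} with hH'
        set U' : Set V := insert c U with hU'
        set χ' : V → ZMod 2 := Function.update χ c (χ a + 1) with hχ'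
        have hχ'c : χ' c = χ a + 1 := by simp [hχ']
        have hχ'of : ∀ y, y ≠ c → χ' y = χ y := by
          intro y hy; simp [hχ', Function.update_of_ne hy]
        have key := ih H' U' χ' hqpath
          (by
            intro x y hxy
            rcases hxy with hxy | hxy
            · obtain ⟨h1, h2⟩ := hHU x y hxy
              exact ⟨Set.mem_insert_of_mem _ h1, Set.mem_insert_of_mem _ h2⟩
            · rw [fromEdgeSet_adj] at hxy
              obtain ⟨hmem, _⟩ := hxy
              simp only [Set.mem_singleton_iff] at hmem
              rw [Sym2.eq_iff] at hmem
              rcases hmem with ⟨rfl, rfl⟩ | ⟨rfl, rfl⟩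
              · exact ⟨Set.mem_insert_of_mem _ ha, Set.mem_insert _ _⟩
              · exact ⟨Set.mem_insert _ _, Set.mem_insert_of_mem _ ha⟩)
          (by
            intro x y hxy
            rcases hxy with hxy | hxy
            · obtain ⟨h1, h2⟩ := hHU x y hxy
              have hx : x ≠ c := fun hh => hcU (hh ▸ h1)
              have hy : y ≠ c := fun hh => hcU (hh ▸ h2)
              rw [hχ'of x hx, hχ'of y hy]
              exact hχ x y hxy
            · rw [fromEdgeSet_adj] at hxy
              obtain ⟨hmem, _⟩ := hxy
              simp only [Set.mem_singleton_iff] at hmem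
              have hac : a ≠ c := fun hh => hca hh.symm
              have base : χ' a ≠ χ' c := by
                rw [hχ'of a hac, hχ'c, zmod2_ne_iff]
                have : ∀ g : ZMod 2, g + (g + 1) = 1 := by decide
                exact this (χ a)
              rw [Sym2.eq_iff] at hmem
              rcases hmem with ⟨rfl, rfl⟩ | ⟨rfl, rfl⟩
              · exact base
              · exact base.symm)
          (by
            intro y hy hyc hyb
            have hyU : y ∉ U := by
              apply hint y _ _ hyb
              · rw [Walk.support_cons]; exact List.mem_cons_of_mem _ hy
              · intro hh; subst hh; exact hanotq hy
            intro hmem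
            rcases Set.mem_insert_iff.mp hmem with h1 | h1
            · exact hyc h1
            · exact hyU h1)
          (Set.mem_insert _ _) (Set.mem_insert_of_mem _ hb)
          (by
            rw [hχ'c, hχ'of b (fun hh => hcb hh.symm)]
            have hlen : (Walk.cons h q).length = q.length + 1 := by simp
            rw [hlen] at hcompat
            push_cast at hcompat ⊢
            have h2 : (2 : ZMod 2) = 0 := by decide
            linear_combination hcompat + h2)
          (by rw [hq]; simp)
        obtain ⟨χ'', hagree, hproper⟩ := key
        refine ⟨χ'', ?_, ?_⟩
        · intro y hy
          rw [hagree y (Set.mem_insert_of_mem _ hy)]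
          exact hχ'of y (fun hh => hcU (hh ▸ hy))
        · intro x y hxy
          rcases hxy with hxy | hxy
          · exact hproper x y (Or.inl (Or.inl hxy))
          · rw [fromEdgeSet_adj] at hxy
            obtain ⟨hmem, hne⟩ := hxy
            simp only [Set.mem_setOf_eq, Walk.edges_cons, List.mem_cons] at hmem
            rcases hmem with hmem | hmem
            · apply hproper x y
              left; right
              rw [fromEdgeSet_adj]
              exact ⟨by simpa using hmem, hne⟩
            · apply hproper x y
              right
              rw [fromEdgeSet_adj]
              exact ⟨hmem, hne⟩

section Part5

variable {G : SimpleGraph V} [DecidableEq V]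

set_option linter.unusedSectionVars false

/-- The invariant maintained during ear growth. -/
def Pre (G H : SimpleGraph V) (U : Set V) (χ : V → ZMod 2) : Prop :=
  H ≤ G ∧ (∀ x y, H.Adj x y → x ∈ U ∧ y ∈ U) ∧ (∀ x y, H.Adj x y → χ x ≠ χ y) ∧
    (∀ x : V, ConnOn H (U \ {x}))

lemma walk_edge_mem_sup_right {H : SimpleGraph V} {a b : V} (p : G.Walk a b) :
    ∀ e ∈ p.edges, e ∈ (H ⊔ SimpleGraph.fromEdgeSet {e | e ∈ p.edges}).edgeSet := by
  intro e he
  rw [SimpleGraph.edgeSet_sup]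
  right
  rw [SimpleGraph.edgeSet_fromEdgeSet]
  refine ⟨he, ?_⟩
  have := p.edges_subset_edgeSet he
  exact fun hd => (G.not_isDiag_of_mem_edgeSet this) hd

/-- From a vertex on the ear one can reach an endpoint of the ear avoiding any
single vertex `x`, walking along the ear. -/
lemma ear_anchor {H : SimpleGraph V} {a b : V} {p : G.Walk a b} (hp : p.IsPath)
    {x y : V} (hy : y ∈ p.support) (hyx : y ≠ x) :
    ∃ t, (t = a ∨ t = b) ∧ t ≠ x ∧
      ∃ w : (H ⊔ SimpleGraph.fromEdgeSet {e | e ∈ p.edges}).Walk y t,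
        (∀ z ∈ w.support, z ∈ p.support) ∧ x ∉ w.support := by
  set H' := H ⊔ SimpleGraph.fromEdgeSet {e | e ∈ p.edges} with hH'
  by_cases hx2 : x ∈ (p.dropUntil y hy).support
  · -- go backwards to a
    have hx1 : x ∉ (p.takeUntil y hy).support := by
      intro hx1
      exact hyx (takeUntil_dropUntil_eq hp hy hx1 hx2).symm
    have hax : a ≠ x := fun hh => hx1 (hh ▸ SimpleGraph.Walk.start_mem_support _)
    refine ⟨a, Or.inl rfl, hax, ?_⟩
    have hedges : ∀ e ∈ (p.takeUntil y hy).reverse.edges, e ∈ H'.edgeSet := by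
      intro e he
      rw [SimpleGraph.Walk.edges_reverse, List.mem_reverse] at he
      exact walk_edge_mem_sup_right p e (p.edges_takeUntil_subset hy he)
    refine ⟨((p.takeUntil y hy).reverse).transfer H' hedges, ?_, ?_⟩
    · intro z hz
      rw [SimpleGraph.Walk.support_transfer, SimpleGraph.Walk.support_reverse,
        List.mem_reverse] at hz
      exact p.support_takeUntil_subset hy hz
    · rw [SimpleGraph.Walk.support_transfer, SimpleGraph.Walk.support_reverse,
        List.mem_reverse]
      exact hx1
  · -- go forwards to b
    have hbx : b ≠ x := fun hh => hx2 (hh ▸ SimpleGraph.Walk.end_mem_support _)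
    refine ⟨b, Or.inr rfl, hbx, ?_⟩
    have hedges : ∀ e ∈ (p.dropUntil y hy).edges, e ∈ H'.edgeSet := by
      intro e he
      exact walk_edge_mem_sup_right p e (p.edges_dropUntil_subset hy he)
    refine ⟨(p.dropUntil y hy).transfer H' hedges, ?_, ?_⟩
    · intro z hz
      rw [SimpleGraph.Walk.support_transfer] at hz
      exact p.support_dropUntil_subset hy hz
    · rw [SimpleGraph.Walk.support_transfer]
      exact hx2

/-- Adding an ear preserves the invariant. -/
lemma ear_add {H : SimpleGraph V} {U : Set V} {χ : V → ZMod 2}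
    (pre : Pre G H U χ) {a b : V} (p : G.Walk a b)
    (hpath : p.IsPath) (hlen : 0 < p.length) (ha : a ∈ U) (hb : b ∈ U)
    (hint : ∀ y ∈ p.support, y ≠ a → y ≠ b → y ∉ U)
    (hcompat : χ a + χ b = (p.length : ZMod 2)) :
    ∃ χ' : V → ZMod 2,
      Pre G (H ⊔ SimpleGraph.fromEdgeSet {e | e ∈ p.edges})
        (U ∪ {y | y ∈ p.support}) χ' := by
  obtain ⟨hle, hsub, hcol, hconn⟩ := pre
  set H' := H ⊔ SimpleGraph.fromEdgeSet {e | e ∈ p.edges} with hH'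
  set U' : Set V := U ∪ {y | y ∈ p.support} with hU'
  obtain ⟨χ', hagree, hproper⟩ :=
    extend_coloring G p H U χ hpath hsub hcol hint ha hb hcompat hlen
  have hHle : H ≤ H' := le_sup_left
  refine ⟨χ', ?_, ?_, hproper, ?_⟩
  · -- H' ≤ G
    intro x y hxy
    rcases hxy with hxy | hxy
    · exact hle hxy
    · rw [SimpleGraph.fromEdgeSet_adj] at hxy
      have := p.edges_subset_edgeSet hxy.1
      rwa [SimpleGraph.mem_edgeSet] at this
  · -- edges within U'
    intro x y hxy
    rcases hxy with hxy | hxy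
    · obtain ⟨h1, h2⟩ := hsub x y hxy
      exact ⟨Or.inl h1, Or.inl h2⟩
    · rw [SimpleGraph.fromEdgeSet_adj] at hxy
      exact ⟨Or.inr (SimpleGraph.Walk.fst_mem_support_of_mem_edges p hxy.1),
        Or.inr (SimpleGraph.Walk.snd_mem_support_of_mem_edges p hxy.1)⟩
  · -- connectivity minus any vertex
    intro x
    obtain ⟨⟨w0, hw0⟩, hUconn⟩ := hconn x
    have anchor : ∀ y ∈ U' \ {x}, ∃ t ∈ U \ {x},
        ∃ w : H'.Walk y t, ∀ z ∈ w.support, z ∈ U' \ {x} := by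
      rintro y ⟨hyU', hyx⟩
      rw [Set.mem_singleton_iff] at hyx
      rcases hyU' with hyU | hyp
      · exact ⟨y, ⟨hyU, hyx⟩, SimpleGraph.Walk.nil, by
          intro z hz
          simp only [SimpleGraph.Walk.support_nil, List.mem_singleton] at hz
          subst hz; exact ⟨Or.inl hyU, hyx⟩⟩
      · obtain ⟨t, hts, htx, w, hwsup, hwx⟩ := ear_anchor (H := H) hpath hyp hyx
        have htU : t ∈ U := by rcases hts with rfl | rfl; exact ha; exact hb
        refine ⟨t, ⟨htU, htx⟩, w, ?_⟩
        intro z hz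
        refine ⟨Or.inr (hwsup z hz), ?_⟩
        intro hzx
        rw [Set.mem_singleton_iff] at hzx
        subst hzx; exact hwx hz
    refine ⟨⟨w0, Or.inl hw0.1, hw0.2⟩, ?_⟩
    intro y1 hy1 y2 hy2
    obtain ⟨t1, ht1, w1, hw1⟩ := anchor y1 hy1
    obtain ⟨t2, ht2, w2, hw2⟩ := anchor y2 hy2
    obtain ⟨wm, hwm⟩ := hUconn t1 ht1 t2 ht2
    have hmedges : ∀ e ∈ wm.edges, e ∈ H'.edgeSet := by
      intro e he
      have := wm.edges_subset_edgeSet he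
      rw [SimpleGraph.edgeSet_sup]
      exact Or.inl this
    refine ⟨w1.append ((wm.transfer H' hmedges).append w2.reverse), ?_⟩
    intro z hz
    rw [SimpleGraph.Walk.mem_support_append_iff] at hz
    rcases hz with hz | hz
    · exact hw1 z hz
    rw [SimpleGraph.Walk.mem_support_append_iff] at hz
    rcases hz with hz | hz
    · rw [SimpleGraph.Walk.support_transfer] at hz
      have := hwm z hz
      exact ⟨Or.inl this.1, this.2⟩
    · rw [SimpleGraph.Walk.support_reverse, List.mem_reverse] at hz
      exact hw2 z hz

section Part6

variable {G : SimpleGraph V} [DecidableEq V]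

set_option linter.unusedSectionVars false

lemma zmod2_add_eq_zero_iff {a c : ZMod 2} : a + c = 0 ↔ a = c := by revert a c; decide

lemma connOn_compl (hG : IsKConnected G 3) (S : Set V) (hS : S.ncard < 3) :
    ConnOn G Sᶜ :=
  connOn_of_induce_connected (hG.2 S hS)

/-- There exists a parity-compatible open ear with nonempty interior. -/
lemma ear_exists (hG : IsKConnected G 3) {H : SimpleGraph V} {U : Set V}
    {χ : V → ZMod 2} (pre : Pre G H U χ) (hU3 : 3 ≤ U.ncard)
    (hUne : U ≠ Set.univ) :
    ∃ (a b : V) (p : G.Walk a b), p.IsPath ∧ 0 < p.length ∧ a ∈ U ∧ b ∈ U ∧ a ≠ b ∧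
      (∀ y ∈ p.support, y ≠ a → y ≠ b → y ∉ U) ∧ (χ a + χ b = (p.length : ZMod 2)) ∧
      ∃ v₀ ∈ p.support, v₀ ∉ U := by
  obtain ⟨hle, hsub, hcol, hconn⟩ := pre
  -- G is connected on univ
  have hGconn : ConnOn G (∅ : Set V)ᶜ := connOn_compl hG ∅ (by simp)
  rw [Set.compl_empty] at hGconn
  -- a vertex in U and a vertex outside U
  have hUne' : U.Nonempty := Set.nonempty_of_ncard_ne_zero (by omega)
  obtain ⟨u0, hu0⟩ := hUne'
  obtain ⟨v0, hv0⟩ := Set.ne_univ_iff_exists_notMem U |>.mp hUne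
  -- STEP 1: an edge u1 - v with u1 ∈ U, v ∉ U
  obtain ⟨w, -⟩ := hGconn.2 u0 (Set.mem_univ _) v0 (Set.mem_univ _)
  obtain ⟨u1, r, hu1U, -, hrU, hrpath, hrlen⟩ :=
    exists_suffix_from_set U (w.toPath : G.Walk u0 v0) hv0
      ⟨u0, SimpleGraph.Walk.start_mem_support _, hu0⟩
  have hrpath' := hrpath (SimpleGraph.Walk.toPath _).2
  rcases r with _ | @⟨u1, v, v0, hadj, rtail⟩
  · simp at hrlen
  have hvU : v ∉ U := by
    apply hrU v _ hadj.ne'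
    rw [SimpleGraph.Walk.support_cons]
    exact List.mem_cons_of_mem _ (SimpleGraph.Walk.start_mem_support _)
  clear hrU hrlen hrpath hrpath' rtail w
  -- STEP 2: path P from v to the first vertex u2 of U, avoiding u1
  have hu1c : ({u1} : Set V).ncard < 3 := by simp
  have hconn1 : ConnOn G ({u1} : Set V)ᶜ := connOn_compl hG _ hu1c
  obtain ⟨u2', hu2'⟩ := (hconn u1).1
  have hv1 : v ∈ ({u1} : Set V)ᶜ := by
    simp only [Set.mem_compl_iff, Set.mem_singleton_iff]
    exact fun hh => hvU (hh ▸ hu1U)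
  have hu2'c : u2' ∈ ({u1} : Set V)ᶜ := by
    simp only [Set.mem_compl_iff, Set.mem_singleton_iff]
    exact hu2'.2
  obtain ⟨w2, hw2⟩ := hconn1.2 v hv1 u2' hu2'c
  have hw2p : ∀ y ∈ (w2.toPath : G.Walk v u2').support, y ∈ ({u1} : Set V)ᶜ :=
    fun y hy => hw2 y (SimpleGraph.Walk.support_toPath_subset _ hy)
  obtain ⟨u2, P, hu2U, hPsub, hPU, hPpath'⟩ :=
    exists_prefix_to_set U (w2.toPath : G.Walk v u2') hvU hu2'.1
  have hPpath : P.IsPath := hPpath' (SimpleGraph.Walk.toPath _).2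
  have hPu1 : ∀ y ∈ P.support, y ≠ u1 := by
    intro y hy
    have := hw2p y (hPsub y hy)
    simpa using this
  have hu2u1 : u2 ≠ u1 := hPu1 u2 (SimpleGraph.Walk.end_mem_support _)
  -- STEP 3: path q from v to a third vertex u3 of U, avoiding u1, u2
  have hu12c : ({u1, u2} : Set V).ncard < 3 := by
    have := Set.ncard_insert_le u1 ({u2} : Set V)
    simp only [Set.ncard_singleton] at this
    omega
  have hconn2 : ConnOn G ({u1, u2} : Set V)ᶜ := connOn_compl hG _ hu12c
  have hUdiff : (U \ {u1, u2}).Nonempty := by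
    rw [Set.nonempty_iff_ne_empty]
    intro hemp
    have hsubU : U ⊆ {u1, u2} := by
      intro y hy
      by_contra hhy
      exact Set.eq_empty_iff_forall_notMem.mp hemp y ⟨hy, hhy⟩
    have := Set.ncard_le_ncard hsubU ((Set.finite_singleton u2).insert u1)
    have h2 : ({u1, u2} : Set V).ncard ≤ 2 := by
      have := Set.ncard_insert_le u1 ({u2} : Set V)
      simp only [Set.ncard_singleton] at this
      omega
    omega
  obtain ⟨u3', hu3'⟩ := hUdiff
  have hvc : v ∈ ({u1, u2} : Set V)ᶜ := by
    simp only [Set.mem_compl_iff, Set.mem_insert_iff, Set.mem_singleton_iff]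
    push_neg
    constructor
    · exact fun hh => hvU (hh ▸ hu1U)
    · exact fun hh => hvU (hh ▸ hu2U)
  have hu3'c : u3' ∈ ({u1, u2} : Set V)ᶜ := by
    simp only [Set.mem_compl_iff]
    exact hu3'.2
  obtain ⟨w3, hw3⟩ := hconn2.2 v hvc u3' hu3'c
  have hw3p : ∀ y ∈ (w3.toPath : G.Walk v u3').support, y ∈ ({u1, u2} : Set V)ᶜ :=
    fun y hy => hw3 y (SimpleGraph.Walk.support_toPath_subset _ hy)
  obtain ⟨u3, q, hu3U, hqsub, hqU, hqpath'⟩ :=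
    exists_prefix_to_set U (w3.toPath : G.Walk v u3') hvU hu3'.1
  have hqpath : q.IsPath := hqpath' (SimpleGraph.Walk.toPath _).2
  have hq12 : ∀ y ∈ q.support, y ≠ u1 ∧ y ≠ u2 := by
    intro y hy
    have := hw3p y (hqsub y hy)
    simp only [Set.mem_compl_iff, Set.mem_insert_iff, Set.mem_singleton_iff] at this
    push_neg at this
    exact this
  have hu3u1 : u3 ≠ u1 := (hq12 u3 (SimpleGraph.Walk.end_mem_support _)).1
  have hu3u2 : u3 ≠ u2 := (hq12 u3 (SimpleGraph.Walk.end_mem_support _)).2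
  -- STEP 4: last exit z of q from P's support, and tail r3 from z to u3
  have hu3P : u3 ∉ {y | y ∈ P.support} := by
    intro hmem
    exact (hPU u3 hmem hu3u2) hu3U
  obtain ⟨z, r3, hzP, hr3sub, hr3P, hr3path', hr3len⟩ :=
    exists_suffix_from_set {y | y ∈ P.support} q hu3P
      ⟨v, SimpleGraph.Walk.start_mem_support _, SimpleGraph.Walk.start_mem_support _⟩
  have hr3path : r3.IsPath := hr3path' hqpath
  have hzu3 : z ≠ u3 := fun hh => hu3P (hh ▸ hzP)
  have hzU : z ∉ U := by
    have hzq : z ∈ q.support := hr3sub z (SimpleGraph.Walk.start_mem_support _)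
    exact hqU z hzq hzu3
  have hz12 : z ≠ u1 ∧ z ≠ u2 :=
    hq12 z (hr3sub z (SimpleGraph.Walk.start_mem_support _))
  have hzP' : z ∈ P.support := hzP
  -- the two pieces of P
  set tk := P.takeUntil z hzP' with htk
  set dp := P.dropUntil z hzP' with hdp
  have htkpath : tk.IsPath := hPpath.takeUntil hzP'
  have hdppath : dp.IsPath := hPpath.dropUntil hzP'
  have hlensum : tk.length + dp.length = P.length := length_takeUntil_add P hzP'
  have htksub : ∀ y ∈ tk.support, y ∈ P.support :=
    fun y hy => P.support_takeUntil_subset hzP' hy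
  have hdpsub : ∀ y ∈ dp.support, y ∈ P.support :=
    fun y hy => P.support_dropUntil_subset hzP' hy
  have hu2tk : u2 ∉ tk.support := by
    intro hmem
    exact hz12.2 (end_mem_takeUntil hPpath hzP' hmem).symm
  have hr3Pint : ∀ y ∈ r3.support, y ∈ P.support → y = z := by
    intro y hy hyP
    by_contra hyz
    exact (hr3P y hy hyz) hyP
  have hr3q : ∀ y ∈ r3.support, y ∈ q.support := hr3sub
  -- the three candidate ears
  -- E1 : u1 → u2
  have hu1P : u1 ∉ P.support := fun hmem => (hPu1 u1 hmem) rfl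
  have hE1path : (SimpleGraph.Walk.cons hadj P).IsPath := by
    rw [SimpleGraph.Walk.cons_isPath_iff]
    exact ⟨hPpath, hu1P⟩
  -- E2 inner : tk.append r3 : v → u3
  have hE2inner : (tk.append r3).IsPath := by
    apply isPath_append' htkpath hr3path
    intro y hy1 hy2
    exact hr3Pint y hy2 (htksub y hy1)
  have hu1tkr : u1 ∉ (tk.append r3).support := by
    rw [SimpleGraph.Walk.mem_support_append_iff]
    rintro (hmem | hmem)
    · exact hu1P (htksub u1 hmem)
    · exact ((hq12 u1 (hr3q u1 hmem)).1) rfl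
  have hE2path : (SimpleGraph.Walk.cons hadj (tk.append r3)).IsPath := by
    rw [SimpleGraph.Walk.cons_isPath_iff]
    exact ⟨hE2inner, hu1tkr⟩
  -- E3 : dp.reverse.append r3 : u2 → u3
  have hE3path : (dp.reverse.append r3).IsPath := by
    apply isPath_append' hdppath.reverse hr3path
    intro y hy1 hy2
    rw [SimpleGraph.Walk.support_reverse, List.mem_reverse] at hy1
    exact hr3Pint y hy2 (hdpsub y hy1)
  -- lengths
  have hL2 : (SimpleGraph.Walk.cons hadj (tk.append r3)).length
      = tk.length + r3.length + 1 := by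
    rw [SimpleGraph.Walk.length_cons, SimpleGraph.Walk.length_append]
  have hL3 : (dp.reverse.append r3).length = dp.length + r3.length := by
    rw [SimpleGraph.Walk.length_append, SimpleGraph.Walk.length_reverse]
  have hL1 : (SimpleGraph.Walk.cons hadj P).length = P.length + 1 := by
    rw [SimpleGraph.Walk.length_cons]
  -- parity pigeonhole
  have hpar : (χ u1 + χ u2 = ((P.length + 1 : ℕ) : ZMod 2))
      ∨ (χ u1 + χ u3 = ((tk.length + r3.length + 1 : ℕ) : ZMod 2))
      ∨ (χ u2 + χ u3 = ((dp.length + r3.length : ℕ) : ZMod 2)) := by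
    have hcast : (tk.length : ZMod 2) + (dp.length : ZMod 2) = (P.length : ZMod 2) := by
      have := congrArg (Nat.cast : ℕ → ZMod 2) hlensum
      push_cast at this
      exact this
    set A := χ u1 + χ u2 + ((P.length + 1 : ℕ) : ZMod 2) with hA
    set B := χ u1 + χ u3 + ((tk.length + r3.length + 1 : ℕ) : ZMod 2) with hB
    set C := χ u2 + χ u3 + ((dp.length + r3.length : ℕ) : ZMod 2) with hC
    have hsum0 : A + B + C = 0 := by
      rw [hA, hB, hC]
      push_cast
      have h2 : ∀ g : ZMod 2, g + g = 0 := by decide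
      linear_combination h2 (χ u1) + h2 (χ u2) + h2 (χ u3) + h2 ((r3.length : ZMod 2))
        + h2 ((P.length : ZMod 2)) + h2 1 + hcast
    have hone : A = 0 ∨ B = 0 ∨ C = 0 := by
      rcases zmod2_cases A with hA0 | hA1
      · exact Or.inl hA0
      rcases zmod2_cases B with hB0 | hB1
      · exact Or.inr (Or.inl hB0)
      rcases zmod2_cases C with hC0 | hC1
      · exact Or.inr (Or.inr hC0)
      rw [hA1, hB1, hC1] at hsum0
      exact absurd hsum0 (by decide)
    rcases hone with h0 | h0 | h0
    · left; rw [hA] at h0; rw [← zmod2_add_eq_zero_iff]; exact h0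
    · right; left; rw [hB] at h0; rw [← zmod2_add_eq_zero_iff]; exact h0
    · right; right; rw [hC] at h0; rw [← zmod2_add_eq_zero_iff]; exact h0
  rcases hpar with hcompat | hcompat | hcompat
  · -- use E1
    refine ⟨u1, u2, SimpleGraph.Walk.cons hadj P, hE1path, by simp, hu1U, hu2U,
      fun hh => hu2u1 hh.symm, ?_, ?_, ?_⟩
    · intro y hy hy1 hy2
      rw [mem_support_cons_iff] at hy
      rcases hy with hy | hy
      · exact absurd hy hy1
      · exact hPU y hy hy2
    · rw [hL1]; exact hcompat
    · refine ⟨v, ?_, hvU⟩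
      rw [mem_support_cons_iff]
      right
      exact SimpleGraph.Walk.start_mem_support _
  · -- use E2
    refine ⟨u1, u3, SimpleGraph.Walk.cons hadj (tk.append r3), hE2path, by simp,
      hu1U, hu3U, fun hh => hu3u1 hh.symm, ?_, ?_, ?_⟩
    · intro y hy hy1 hy3
      rw [mem_support_cons_iff] at hy
      rcases hy with hy | hy
      · exact absurd hy hy1
      rw [SimpleGraph.Walk.mem_support_append_iff] at hy
      rcases hy with hy | hy
      · have hyP : y ∈ P.support := htksub y hy
        have hyu2 : y ≠ u2 := fun hh => hu2tk (hh ▸ hy)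
        exact hPU y hyP hyu2
      · exact hqU y (hr3q y hy) hy3
    · rw [hL2]; exact hcompat
    · refine ⟨v, ?_, hvU⟩
      rw [mem_support_cons_iff]
      right
      rw [SimpleGraph.Walk.mem_support_append_iff]
      left
      exact SimpleGraph.Walk.start_mem_support _
  · -- use E3
    refine ⟨u2, u3, dp.reverse.append r3, hE3path, ?_, hu2U, hu3U,
      fun hh => hu3u2 hh.symm, ?_, ?_, ?_⟩
    · rw [hL3]; omega
    · intro y hy hy2 hy3
      rw [SimpleGraph.Walk.mem_support_append_iff] at hy
      rcases hy with hy | hy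
      · rw [SimpleGraph.Walk.support_reverse, List.mem_reverse] at hy
        exact hPU y (hdpsub y hy) hy2
      · exact hqU y (hr3q y hy) hy3
    · rw [hL3]; exact hcompat
    · refine ⟨z, ?_, hzU⟩
      rw [SimpleGraph.Walk.mem_support_append_iff]
      right
      exact SimpleGraph.Walk.start_mem_support _

end Part6

section Part7

variable {G : SimpleGraph V} [DecidableEq V] [Fintype V]

set_option linter.unusedSectionVars false

lemma walk_len0 {x y : V} (w : G.Walk x y) (h : w.length = 0) : x = y := by
  cases w with
  | nil => rfl
  | cons h' p => simp at h

/-- There is a path that cannot be extended at its start. -/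
lemma exists_maximal_path (a0 : V) :
    ∃ (a b : V) (q : G.Walk a b), q.IsPath ∧ ∀ c, G.Adj a c → c ∈ q.support := by
  suffices h : ∀ k (a b : V) (q : G.Walk a b), q.IsPath →
      Fintype.card V - q.length ≤ k →
      ∃ (a' b' : V) (q' : G.Walk a' b'), q'.IsPath ∧ ∀ c, G.Adj a' c → c ∈ q'.support by
    exact h (Fintype.card V) a0 a0 SimpleGraph.Walk.nil SimpleGraph.Walk.IsPath.nil
      (by omega)
  intro k
  induction k with
  | zero =>
      intro a b q hq hcard
      have := hq.length_lt
      omega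
  | succ k ih =>
      intro a b q hq hcard
      by_cases hnb : ∀ c, G.Adj a c → c ∈ q.support
      · exact ⟨a, b, q, hq, hnb⟩
      · push_neg at hnb
        obtain ⟨c, hac, hc⟩ := hnb
        have hq' : (SimpleGraph.Walk.cons hac.symm q).IsPath := by
          rw [SimpleGraph.Walk.cons_isPath_iff]
          exact ⟨hq, hc⟩
        apply ih c b (SimpleGraph.Walk.cons hac.symm q) hq'
        have := hq'.length_lt
        rw [SimpleGraph.Walk.length_cons] at this ⊢
        omega

/-- A 3-connected graph on ≥ 5 vertices has three distinct neighbours at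
every vertex. -/
lemma three_neighbors (hG : IsKConnected G 3) (hV : 5 ≤ Fintype.card V) (v : V) :
    ∃ n1 n2 n3 : V, G.Adj v n1 ∧ G.Adj v n2 ∧ G.Adj v n3 ∧
      n1 ≠ n2 ∧ n1 ≠ n3 ∧ n2 ≠ n3 := by
  set N : Set V := G.neighborSet v with hN
  have hNfin : N.Finite := Set.toFinite _
  have hcard : 3 ≤ N.ncard := by
    by_contra hlt
    push_neg at hlt
    have hconnN := connOn_compl hG N (by omega)
    have hvN : v ∈ Nᶜ := by
      simp [hN, SimpleGraph.mem_neighborSet]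
    have hex : ∃ w, w ∉ N ∧ w ≠ v := by
      by_contra hno
      push_neg at hno
      have hsub : Set.univ ⊆ N ∪ {v} := by
        intro y _
        by_cases hy : y ∈ N
        · exact Or.inl hy
        · exact Or.inr (hno y hy)
      have h1 : (Set.univ : Set V).ncard ≤ (N ∪ {v}).ncard :=
        Set.ncard_le_ncard hsub (Set.toFinite _)
      have h2 : (N ∪ {v}).ncard ≤ N.ncard + 1 := by
        have := Set.ncard_union_le N ({v} : Set V)
        simpa using this
      have h3 : (Set.univ : Set V).ncard = Fintype.card V := by
        rw [Set.ncard_univ, Nat.card_eq_fintype_card]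
      omega
    obtain ⟨w, hwN, hwv⟩ := hex
    obtain ⟨wk, hwk⟩ := hconnN.2 v hvN w (by simpa using hwN)
    cases wk with
    | nil => exact hwv rfl
    | cons h p =>
        rename_i c
        have hcN : c ∈ N := h
        have : c ∈ Nᶜ := hwk c (by
          rw [SimpleGraph.Walk.support_cons]
          exact List.mem_cons_of_mem _ (SimpleGraph.Walk.start_mem_support _))
        exact this hcN
  obtain ⟨n1, hn1⟩ := Set.nonempty_of_ncard_ne_zero (s := N) (by omega)
  have h2 : 2 ≤ (N \ {n1}).ncard := by
    rw [Set.ncard_diff_singleton_of_mem hn1]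
    omega
  obtain ⟨n2, hn2⟩ := Set.nonempty_of_ncard_ne_zero (s := N \ {n1}) (by omega)
  have h3 : 1 ≤ ((N \ {n1}) \ {n2}).ncard := by
    rw [Set.ncard_diff_singleton_of_mem hn2]
    omega
  obtain ⟨n3, hn3⟩ := Set.nonempty_of_ncard_ne_zero (s := (N \ {n1}) \ {n2}) (by omega)
  refine ⟨n1, n2, n3, hn1, hn2.1, hn3.1.1, ?_, ?_, ?_⟩
  · exact fun hh => hn2.2 (by simp [hh.symm])
  · exact fun hh => hn3.1.2 (by simp [hh.symm])
  · exact fun hh => hn3.2 (by simp [hh.symm])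

lemma odd_cast_zmod2 {n : ℕ} (h : Odd n) : (n : ZMod 2) = 1 := by
  obtain ⟨m, rfl⟩ := h
  push_cast
  have : (2 : ZMod 2) = 0 := by decide
  rw [this]
  ring

/-- Base: an even cycle presented as an edge plus an odd path of length ≥ 2. -/
lemma base_cycle (hG : IsKConnected G 3) (hV : 5 ≤ Fintype.card V) :
    ∃ (s t : V) (p : G.Walk s t),
      G.Adj s t ∧ p.IsPath ∧ Odd p.length ∧ 2 ≤ p.length := by
  obtain ⟨v0⟩ : Nonempty V := by
    have : 0 < Fintype.card V := by omega
    exact Fintype.card_pos_iff.mp this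
  obtain ⟨x0, b, q, hq, hmax⟩ := exists_maximal_path (G := G) v0
  obtain ⟨n1, n2, n3, ha1, ha2, ha3, h12, h13, h23⟩ := three_neighbors hG hV x0
  -- q is not nil
  rcases q with _ | @⟨x0, x1, b, hadj01, qtail⟩
  · exfalso
    have := hmax n1 ha1
    simp only [SimpleGraph.Walk.support_nil, List.mem_singleton] at this
    exact ha1.ne (this.symm)
  set q : G.Walk x0 b := SimpleGraph.Walk.cons hadj01 qtail with hqdef
  -- pick two neighbors different from x1
  have hpick : ∃ cA cB : V, cA ≠ cB ∧ G.Adj x0 cA ∧ G.Adj x0 cB ∧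
      cA ≠ x1 ∧ cB ≠ x1 := by
    by_cases e1 : n1 = x1
    · exact ⟨n2, n3, h23, ha2, ha3, fun hh => h12 (by rw [e1, hh]),
        fun hh => h13 (by rw [e1, hh])⟩
    by_cases e2 : n2 = x1
    · exact ⟨n1, n3, h13, ha1, ha3, e1, fun hh => h23 (by rw [e2, hh])⟩
    · exact ⟨n1, n2, h12, ha1, ha2, e1, e2⟩
  obtain ⟨cA, cB, hAB, haA, haB, hA1, hB1⟩ := hpick
  have hAq : cA ∈ q.support := hmax cA haA
  have hBq : cB ∈ q.support := hmax cB haB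
  -- order the two neighbours along q
  have hkey : ∀ c1 c2 : V, c1 ≠ c2 → G.Adj x0 c1 → G.Adj x0 c2 → c1 ≠ x1 → c2 ≠ x1 →
      (hc2 : c2 ∈ q.support) → c1 ∈ (q.takeUntil c2 hc2).support →
      ∃ (s t : V) (p : G.Walk s t),
        G.Adj s t ∧ p.IsPath ∧ Odd p.length ∧ 2 ≤ p.length := by
    intro c1 c2 h12' ha1' ha2' hx1 hx2 hc2 hc1t
    set t : G.Walk x0 c2 := q.takeUntil c2 hc2 with htdef
    have htpath : t.IsPath := hq.takeUntil hc2
    -- t = cons hadj01 inner1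
    have hc2q : c2 ∈ qtail.support := by
      have := hc2
      rw [SimpleGraph.Walk.support_cons, List.mem_cons] at this
      rcases this with hh | hh
      · exact absurd hh.symm ha2'.ne
      · exact hh
    have ht : t = SimpleGraph.Walk.cons hadj01 (qtail.takeUntil c2 hc2q) :=
      takeUntil_cons hadj01 qtail hc2q ha2'.ne
    have htlen : 2 ≤ t.length := by
      rw [ht, SimpleGraph.Walk.length_cons]
      rcases Nat.eq_zero_or_pos (qtail.takeUntil c2 hc2q).length with h0 | h0
      · exact absurd (walk_len0 _ h0) (fun hh => hx2 hh.symm)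
      · omega
    -- split t at c1
    set tk2 : G.Walk x0 c1 := t.takeUntil c1 hc1t with htk2
    set dp2 : G.Walk c1 c2 := t.dropUntil c1 hc1t with hdp2
    have htk2path : tk2.IsPath := htpath.takeUntil hc1t
    have hdp2path : dp2.IsPath := htpath.dropUntil hc1t
    have hsum2 : tk2.length + dp2.length = t.length := length_takeUntil_add t hc1t
    have hx0dp : x0 ∉ dp2.support := by
      intro hmem
      exact ha1'.ne (start_mem_dropUntil htpath hc1t hmem)
    have htk2len : 2 ≤ tk2.length := by
      have hc1t' : c1 ∈ (qtail.takeUntil c2 hc2q).support := by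
        have := hc1t
        rw [ht, SimpleGraph.Walk.support_cons, List.mem_cons] at this
        rcases this with hh | hh
        · exact absurd hh.symm ha1'.ne
        · exact hh
      have htk2' : tk2 = SimpleGraph.Walk.cons hadj01
          ((qtail.takeUntil c2 hc2q).takeUntil c1 hc1t') := by
        rw [htk2]
        have : t.takeUntil c1 hc1t =
            (SimpleGraph.Walk.cons hadj01 (qtail.takeUntil c2 hc2q)).takeUntil c1
              (ht ▸ hc1t) := by
          congr 1
        rw [this, takeUntil_cons _ _ hc1t' ha1'.ne]
      rw [htk2', SimpleGraph.Walk.length_cons]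
      rcases Nat.eq_zero_or_pos ((qtail.takeUntil c2 hc2q).takeUntil c1 hc1t').length
        with h0 | h0
      · exact absurd (walk_len0 _ h0) (fun hh => hx1 hh.symm)
      · omega
    have hdp2len : 1 ≤ dp2.length := by
      rcases Nat.eq_zero_or_pos dp2.length with h0 | h0
      · exact absurd (walk_len0 _ h0) h12'
      · omega
    -- parity case analysis
    by_cases hodd2 : Odd t.length
    · exact ⟨x0, c2, t, ha2', htpath, hodd2, htlen⟩
    by_cases hodd1 : Odd tk2.length
    · exact ⟨x0, c1, tk2, ha1', htk2path, hodd1, htk2len⟩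
    · -- both even: use cons (x0~c1) dp2
      refine ⟨x0, c2, SimpleGraph.Walk.cons ha1' dp2, ha2', ?_, ?_, ?_⟩
      · rw [SimpleGraph.Walk.cons_isPath_iff]
        exact ⟨hdp2path, hx0dp⟩
      · rw [SimpleGraph.Walk.length_cons]
        rw [Nat.odd_iff] at hodd1 hodd2 ⊢
        push_neg at hodd1 hodd2
        omega
      · rw [SimpleGraph.Walk.length_cons]
        omega
  rcases mem_takeUntil_or q hAq hBq hAB with hord | hord
  · exact hkey cA cB hAB haA haB hA1 hB1 hBq hord
  · exact hkey cB cA hAB.symm haB haA hB1 hA1 hAq hord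

end Part7

section Part8

variable {G : SimpleGraph V} [DecidableEq V] [Fintype V]

set_option linter.unusedSectionVars false

lemma second_vertex_interior {s t : V} (p : G.Walk s t) (hp : p.IsPath)
    (hl : 2 ≤ p.length) : ∃ y ∈ p.support, y ≠ s ∧ y ≠ t := by
  rcases p with _ | @⟨s, w, t, hadj, p'⟩
  · simp at hl
  refine ⟨w, ?_, hadj.ne', ?_⟩
  · rw [SimpleGraph.Walk.support_cons]
    exact List.mem_cons_of_mem _ (SimpleGraph.Walk.start_mem_support _)
  · intro hwt
    subst hwt
    rcases p' with _ | @⟨w, w2, t, hadj2, p''⟩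
    · simp at hl
    · have hpp := (SimpleGraph.Walk.cons_isPath_iff _ _).mp
        ((SimpleGraph.Walk.cons_isPath_iff _ _).mp hp).1
      exact hpp.2 (SimpleGraph.Walk.end_mem_support p'')

/-- The base state: an even cycle gives the invariant with at least 3 vertices. -/
lemma base_state (hG : IsKConnected G 3) (hV : 5 ≤ Fintype.card V) :
    ∃ (H : SimpleGraph V) (U : Set V) (χ : V → ZMod 2),
      Pre G H U χ ∧ 3 ≤ U.ncard := by
  obtain ⟨s, t, p, hst, hppath, hodd, hlen2⟩ := base_cycle hG hV
  have hstne : s ≠ t := hst.ne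
  set H0 : SimpleGraph V := SimpleGraph.fromEdgeSet {s(s, t)} with hH0
  set U0 : Set V := {s, t} with hU0
  set χ0 : V → ZMod 2 := fun y => if y = t then 1 else 0 with hχ0
  have hH0adj : ∀ x y, H0.Adj x y ↔ (x = s ∧ y = t ∨ x = t ∧ y = s) := by
    intro x y
    rw [hH0, SimpleGraph.fromEdgeSet_adj]
    constructor
    · rintro ⟨hmem, hne⟩
      simp only [Set.mem_singleton_iff, Sym2.eq_iff] at hmem
      exact hmem
    · rintro (⟨rfl, rfl⟩ | ⟨rfl, rfl⟩)
      · exact ⟨by simp, hstne⟩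
      · exact ⟨by simp [Sym2.eq_swap], hstne.symm⟩
  have pre0 : Pre G H0 U0 χ0 := by
    refine ⟨?_, ?_, ?_, ?_⟩
    · intro x y hxy
      rcases (hH0adj x y).mp hxy with ⟨rfl, rfl⟩ | ⟨rfl, rfl⟩
      · exact hst
      · exact hst.symm
    · intro x y hxy
      rcases (hH0adj x y).mp hxy with ⟨rfl, rfl⟩ | ⟨rfl, rfl⟩
      · exact ⟨Or.inl rfl, Or.inr rfl⟩
      · exact ⟨Or.inr rfl, Or.inl rfl⟩
    · intro x y hxy
      rcases (hH0adj x y).mp hxy with ⟨rfl, rfl⟩ | ⟨rfl, rfl⟩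
      · simp [hχ0, hstne]
      · simp [hχ0, hstne]
    · intro x
      by_cases hxs : x = s
      · subst hxs
        refine ⟨⟨t, Or.inr rfl, by simpa using hstne.symm⟩, ?_⟩
        intro a ha b hb
        have ha' : a = t := by
          rcases ha.1 with h1 | h1
          · exact absurd h1 (by simpa using ha.2)
          · exact h1
        have hb' : b = t := by
          rcases hb.1 with h1 | h1
          · exact absurd h1 (by simpa using hb.2)
          · exact h1
        subst ha'; subst hb'
        exact ⟨SimpleGraph.Walk.nil, by
          intro y hy
          simp only [SimpleGraph.Walk.support_nil, List.mem_singleton] at hy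
          subst hy
          exact ⟨Or.inr rfl, by simpa using hstne.symm⟩⟩
      · -- x ≠ s : connect everything to s
        have hsx : ¬ s = x := fun hh => hxs hh.symm
        refine ⟨⟨s, Or.inl rfl, by simpa using hsx⟩, ?_⟩
        intro a ha b hb
        have hsmem : s ∈ U0 \ {x} := ⟨Or.inl rfl, by simpa using hsx⟩
        have walk_to_s : ∀ c, c ∈ U0 \ {x} → ∃ w : H0.Walk c s,
            ∀ y ∈ w.support, y ∈ U0 \ {x} := by
          intro c hc
          rcases hc.1 with h1 | h1
          · subst h1
            exact ⟨SimpleGraph.Walk.nil, by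
              intro y hy
              simp only [SimpleGraph.Walk.support_nil, List.mem_singleton] at hy
              subst hy; exact hc⟩
          · have h1' : c = t := h1
            subst h1'
            refine ⟨SimpleGraph.Walk.cons ((hH0adj c s).mpr (Or.inr ⟨rfl, rfl⟩))
              SimpleGraph.Walk.nil, ?_⟩
            intro y hy
            simp only [SimpleGraph.Walk.support_cons, SimpleGraph.Walk.support_nil,
              List.mem_cons, List.mem_singleton] at hy
            rcases hy with rfl | hy2
            · exact hc
            · rcases hy2 with rfl | hy3
              · exact hsmem
              · simp at hy3
        obtain ⟨w1, hw1⟩ := walk_to_s a ha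
        obtain ⟨w2, hw2⟩ := walk_to_s b hb
        refine ⟨w1.append w2.reverse, ?_⟩
        intro y hy
        rw [SimpleGraph.Walk.mem_support_append_iff] at hy
        rcases hy with hy | hy
        · exact hw1 y hy
        · rw [SimpleGraph.Walk.support_reverse, List.mem_reverse] at hy
          exact hw2 y hy
  -- add the odd path as an ear
  have hint : ∀ y ∈ p.support, y ≠ s → y ≠ t → y ∉ U0 := by
    intro y _ hys hyt hmem
    rcases hmem with h1 | h1
    · exact hys h1
    · exact hyt h1
  have hcompat : χ0 s + χ0 t = (p.length : ZMod 2) := by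
    rw [odd_cast_zmod2 hodd]
    simp [hχ0, hstne]
  obtain ⟨χ', pre'⟩ := ear_add pre0 p hppath (by omega) (Or.inl rfl) (Or.inr rfl)
    hint hcompat
  refine ⟨_, _, χ', pre', ?_⟩
  obtain ⟨y, hy, hys, hyt⟩ := second_vertex_interior p hppath hlen2
  have hsub3 : ({s, t, y} : Set V) ⊆ U0 ∪ {z | z ∈ p.support} := by
    intro z hz
    rcases hz with rfl | rfl | rfl
    · exact Or.inl (Or.inl rfl)
    · exact Or.inl (Or.inr rfl)
    · exact Or.inr hy
  have h3 : ({s, t, y} : Set V).ncard = 3 := by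
    have hs1 : s ∉ ({t, y} : Set V) := by
      simp only [Set.mem_insert_iff, Set.mem_singleton_iff]
      push_neg
      exact ⟨hstne, fun hh => hys hh.symm⟩
    have hs2 : t ∉ ({y} : Set V) := by
      simp only [Set.mem_singleton_iff]
      exact fun hh => hyt hh.symm
    rw [Set.ncard_insert_of_notMem hs1, Set.ncard_insert_of_notMem hs2,
      Set.ncard_singleton]
  calc 3 = ({s, t, y} : Set V).ncard := h3.symm
    _ ≤ _ := Set.ncard_le_ncard hsub3 (Set.toFinite _)

/-- Grow the invariant until it spans all of `V`. -/
lemma grow (hG : IsKConnected G 3) (hV : 5 ≤ Fintype.card V) :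
    ∀ (k : ℕ) (H : SimpleGraph V) (U : Set V) (χ : V → ZMod 2),
      Pre G H U χ → 3 ≤ U.ncard → Fintype.card V - U.ncard ≤ k →
      ∃ (H' : SimpleGraph V) (χ' : V → ZMod 2), Pre G H' Set.univ χ' := by
  intro k
  induction k with
  | zero =>
      intro H U χ pre h3 hcard
      have hU : U = Set.univ := by
        have h1 : (Set.univ : Set V).ncard = Fintype.card V := by
          rw [Set.ncard_univ, Nat.card_eq_fintype_card]
        have h2 : U.ncard ≤ (Set.univ : Set V).ncard :=
          Set.ncard_le_ncard (Set.subset_univ U) (Set.toFinite _)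
        exact Set.eq_of_subset_of_ncard_le (Set.subset_univ U) (by omega) (Set.toFinite _)
      exact ⟨H, χ, hU ▸ pre⟩
  | succ k ih =>
      intro H U χ pre h3 hcard
      by_cases hUuniv : U = Set.univ
      · exact ⟨H, χ, hUuniv ▸ pre⟩
      · obtain ⟨a, b, p, hppath, hplen, ha, hb, hab, hint, hcompat, v₀, hv₀p, hv₀U⟩ :=
          ear_exists hG pre h3 hUuniv
        obtain ⟨χ', pre'⟩ := ear_add pre p hppath hplen ha hb hint hcompat
        apply ih _ _ _ pre'
        · calc 3 ≤ U.ncard := h3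
            _ ≤ (U ∪ {y | y ∈ p.support}).ncard :=
              Set.ncard_le_ncard Set.subset_union_left (Set.toFinite _)
        · have hlt : U.ncard < (U ∪ {y | y ∈ p.support}).ncard := by
            apply Set.ncard_lt_ncard
            · constructor
              · exact Set.subset_union_left
              · intro hsub
                exact hv₀U (hsub (Or.inr hv₀p))
            · exact Set.toFinite _
          have hle : (U ∪ {y | y ∈ p.support}).ncard ≤ Fintype.card V := by
            have := Set.ncard_le_ncard
              (Set.subset_univ (U ∪ {y | y ∈ p.support})) (Set.toFinite _)
            rwa [Set.ncard_univ, Nat.card_eq_fintype_card] at this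
          omega

end Part8


/-- Every 3-connected graph on at least 5 vertices has a spanning bipartite
2-connected subgraph (the upper bound `f(2,n) ≤ 3` for `n ≥ 5`). -/
theorem three_connected_spanning_bipartite_two_connected (V : Type) [Fintype V]
    (hV : 5 ≤ Fintype.card V) (G : SimpleGraph V) (hG : IsKConnected G 3) :
    ∃ H : SimpleGraph V, H ≤ G ∧ H.Colorable 2 ∧ IsKConnected H 2 := by
  classical
  obtain ⟨H0, U0, χ0, pre0, h30⟩ := base_state hG hV
  obtain ⟨H, χ, pre⟩ := grow hG hV (Fintype.card V) H0 U0 χ0 pre0 h30 (by omega)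
  obtain ⟨hle, hsub, hcol, hconn⟩ := pre
  refine ⟨H, hle, ?_, ?_, ?_⟩
  · -- 2-colorable
    have coloring : H.Coloring (ZMod 2) := SimpleGraph.Coloring.mk χ
      (fun {a b} hab => hcol a b hab)
    have := coloring.colorable
    simpa using this
  · -- at least 3 vertices
    rw [Nat.card_eq_fintype_card]
    omega
  · -- removing at most one vertex leaves it connected
    intro S hS
    have hS1 : S.ncard ≤ 1 := by omega
    rw [Set.ncard_le_one_iff_eq (Set.toFinite S)] at hS1
    rcases hS1 with rfl | ⟨x, rfl⟩
    · -- S = ∅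
      rw [Set.compl_empty]
      apply induce_connected_of_connOn
      have hne : Nonempty V := Fintype.card_pos_iff.mp (by omega)
      refine ⟨⟨Classical.arbitrary V, Set.mem_univ _⟩, ?_⟩
      intro a _ b _
      -- pick x different from a and b
      have hex : ∃ x : V, x ≠ a ∧ x ≠ b := by
        by_contra hno
        push_neg at hno
        have hsub' : (Set.univ : Set V) ⊆ {a, b} := by
          intro y _
          by_cases hya : y = a
          · exact Or.inl hya
          · exact Or.inr (hno y hya)
        have h1 := Set.ncard_le_ncard hsub' (Set.toFinite _)
        have h2 : ({a, b} : Set V).ncard ≤ 2 := by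
          have := Set.ncard_insert_le a ({b} : Set V)
          simp only [Set.ncard_singleton] at this
          omega
        rw [Set.ncard_univ, Nat.card_eq_fintype_card] at h1
        omega
      obtain ⟨x, hxa, hxb⟩ := hex
      obtain ⟨-, hwalk⟩ := hconn x
      obtain ⟨w, hw⟩ := hwalk a ⟨Set.mem_univ _, by simpa using (fun h => hxa h.symm : ¬ a = x)⟩
        b ⟨Set.mem_univ _, by simpa using (fun h => hxb h.symm : ¬ b = x)⟩
      exact ⟨w, fun y _ => Set.mem_univ y⟩
    · -- S = {x}
      rw [Set.compl_eq_univ_diff]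
      exact induce_connected_of_connOn (hconn x)
end Part5
end

section
/- For every even integer n ≥ 6, the graph obtained from a cycle on n−1 vertices by adding one additional vertex joined by edges to two non-adjacent cycle vertices is 2-connected but has no spanning bipartite 2-connected subgraph. (This shows f(2,n) ≥ 3 for even n ≥ 6.) -/
open scoped Fin.NatCast Fin.IntCast Fin.CommRing

section Aux

open SimpleGraph

lemma fin_cast_ne_zero {m : ℕ} [NeZero m] (k : ℕ) (h0 : 0 < k) (hk : k < m) :
    (k : Fin m) ≠ 0 := by
  intro h
  have := Fin.val_cast_of_lt hk
  rw [h] at this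
  simp at this
  omega

lemma fin_add_cast_ne {m : ℕ} [NeZero m] (v : Fin m) (k : ℕ) (h0 : 0 < k) (hk : k < m) :
    v + (k : Fin m) ≠ v := by
  intro h
  have h2 : v + (k : Fin m) = v + 0 := by rw [h, add_zero]
  exact fin_cast_ne_zero k h0 hk (add_left_cancel h2)

lemma fin_add_one_ne {m : ℕ} [NeZero m] (hm : 2 ≤ m) (v : Fin m) : v + 1 ≠ v := by
  have : ((1 : ℕ) : Fin m) = 1 := by push_cast; rfl
  rw [← this]
  exact fin_add_cast_ne v 1 (by omega) (by omega)

lemma fin_val_one' {m : ℕ} [NeZero m] (hm : 2 ≤ m) : (1 : Fin m).val = 1 := by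
  have : ((1 : ℕ) : Fin m) = 1 := by push_cast; rfl
  rw [← this, Fin.val_cast_of_lt (by omega)]

lemma fin_neg_one_eq {m : ℕ} [NeZero m] : (((m - 1 : ℕ)) : Fin m) = -1 := by
  have hm : 0 < m := Nat.pos_of_ne_zero (NeZero.ne m)
  have : (((m - 1 : ℕ)) : Fin m) + 1 = 0 := by
    have : (((m - 1 : ℕ)) : Fin m) + 1 = ((m - 1 + 1 : ℕ) : Fin m) := by push_cast; ring
    rw [this, Nat.sub_add_cancel hm, Fin.natCast_self]
  linear_combination this

lemma closed_walk_of_cycle_edges {m : ℕ} [NeZero m] {V : Type*} (H : SimpleGraph V)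
    (f : Fin m → V) (hf : ∀ i, H.Adj (f i) (f (i + 1))) (v : Fin m) :
    ∃ p : H.Walk (f v) (f v), p.length = m := by
  have key : ∀ k : ℕ, ∃ (w : Fin m) (p : H.Walk (f v) (f w)), w = v + (k : Fin m) ∧
      p.length = k := by
    intro k
    induction k with
    | zero => exact ⟨v, Walk.nil, by simp, rfl⟩
    | succ k ih =>
      obtain ⟨w, p, hw, hp⟩ := ih
      refine ⟨w + 1, p.concat (hf w), ?_, by simp [hp]⟩
      rw [hw]; push_cast; ring
  obtain ⟨w, p, hw, hp⟩ := key m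
  rw [Fin.natCast_self, add_zero] at hw
  subst hw
  exact ⟨p, hp⟩

lemma exists_adj_of_reachable {V : Type*} {G : SimpleGraph V} {u v : V}
    (h : G.Reachable u v) (hne : u ≠ v) : ∃ w, G.Adj u w := by
  obtain ⟨p⟩ := h
  cases p with
  | nil => exact absurd rfl hne
  | cons h _ => exact ⟨_, h⟩

lemma two_connected_min_degree {V : Type*} [Fintype V] {H : SimpleGraph V}
    (hH : IsKConnected H 2) (x : V) : ∃ y z, y ≠ z ∧ H.Adj x y ∧ H.Adj x z := by
  classical
  have hcard : 3 ≤ Fintype.card V := by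
    have := hH.1; rwa [Nat.card_eq_fintype_card] at this
  by_contra hcon
  push_neg at hcon
  by_cases hex : ∃ y, H.Adj x y
  · obtain ⟨y, hy⟩ := hex
    have hall : ∀ z, H.Adj x z → z = y := by
      intro z hz
      by_contra hzy
      exact hcon z y hzy hz hy
    have hconn := hH.2 {y} (by simp)
    have hxy : x ≠ y := H.ne_of_adj hy
    obtain ⟨z, hzx, hzy⟩ : ∃ z, z ≠ x ∧ z ≠ y := by
      by_contra hc
      push_neg at hc
      have hsub : (Finset.univ : Finset V) ⊆ {x, y} := by
        intro t _
        by_cases htx : t = x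
        · simp [htx]
        · simp [hc t htx]
      have h1 := Finset.card_le_card hsub
      have h2 : ({x, y} : Finset V).card ≤ 2 := Finset.card_le_two
      rw [Finset.card_univ] at h1
      omega
    have hx : x ∈ ({y}ᶜ : Set V) := by simp [hxy]
    have hz : z ∈ ({y}ᶜ : Set V) := by simp [hzy]
    have hr := hconn.preconnected ⟨x, hx⟩ ⟨z, hz⟩
    obtain ⟨w, hw⟩ := exists_adj_of_reachable hr
      (by simp [Subtype.ext_iff]; exact fun h => hzx h.symm)
    have hadj : H.Adj x w.val := hw
    have := hall _ hadj
    have hwmem := w.2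
    rw [this] at hwmem
    simp at hwmem
  · push_neg at hex
    have hconn := hH.2 ∅ (by simp)
    obtain ⟨z, hzx⟩ : ∃ z : V, z ≠ x := by
      have : 1 < Fintype.card V := by omega
      obtain ⟨z, hz⟩ := Fintype.exists_ne_of_one_lt_card this x
      exact ⟨z, hz⟩
    have hr := hconn.preconnected ⟨x, by simp⟩ ⟨z, by simp⟩
    obtain ⟨w, hw⟩ := exists_adj_of_reachable hr
      (by simp [Subtype.ext_iff]; exact fun h => hzx h.symm)
    exact hex w.val hw

lemma induce_reach {m : ℕ} [NeZero m] (hm : 3 ≤ m) (G : SimpleGraph (Option (Fin m)))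
    (hcyc : ∀ i : Fin m, G.Adj (some i) (some (i + 1)))
    (S : Set (Option (Fin m))) (v : Fin m)
    (hSv : ∀ i : Fin m, i ≠ v → some i ∉ S) :
    ∀ i : Fin m, i ≠ v → ∀ (hi : some i ∈ Sᶜ) (h1 : some (v + 1) ∈ Sᶜ),
      (G.induce Sᶜ).Reachable ⟨some (v + 1), h1⟩ ⟨some i, hi⟩ := by
  intro i hiv hi h1
  have claim : ∀ k : ℕ, k < m - 1 →
      ∀ (hmem : some (v + 1 + (k : Fin m)) ∈ Sᶜ),
      (G.induce Sᶜ).Reachable ⟨some (v + 1), h1⟩ ⟨some (v + 1 + (k : Fin m)), hmem⟩ := by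
    intro k
    induction k with
    | zero =>
      intro _ hmem
      have : (⟨some (v + 1 + ((0 : ℕ) : Fin m)), hmem⟩ : ↥Sᶜ) = ⟨some (v + 1), h1⟩ := by
        simp
      rw [this]
    | succ k ih =>
      intro hk hmem
      have hne : v + 1 + (k : Fin m) ≠ v := by
        have : v + 1 + (k : Fin m) = v + ((1 + k : ℕ) : Fin m) := by push_cast; ring
        rw [this]
        exact fin_add_cast_ne v (1 + k) (by omega) (by omega)
      have hmemk : some (v + 1 + (k : Fin m)) ∈ Sᶜ := hSv _ hne
      have hreach := ih (by omega) hmemk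
      have hcast : v + 1 + ((k + 1 : ℕ) : Fin m) = (v + 1 + (k : Fin m)) + 1 := by
        push_cast; ring
      have hmem' : some ((v + 1 + (k : Fin m)) + 1) ∈ Sᶜ := by rw [← hcast]; exact hmem
      have hadj : (G.induce Sᶜ).Adj ⟨some (v + 1 + (k : Fin m)), hmemk⟩
          ⟨some ((v + 1 + (k : Fin m)) + 1), hmem'⟩ := hcyc _
      have : (⟨some (v + 1 + ((k+1 : ℕ) : Fin m)), hmem⟩ : ↥Sᶜ) =
          ⟨some ((v + 1 + (k : Fin m)) + 1), hmem'⟩ := by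
        simp only [Subtype.mk.injEq, Option.some.injEq]
        exact hcast
      rw [this]
      exact hreach.trans hadj.reachable
  set k := (i - (v + 1)).val with hkdef
  have hklt : k < m - 1 := by
    have hk2 : k < m := (i - (v + 1)).isLt
    by_contra hc
    have hkeq : k = m - 1 := by omega
    have : i - (v + 1) = ((m - 1 : ℕ) : Fin m) := by
      apply Fin.ext
      rw [Fin.val_cast_of_lt (by omega)]
      exact hkeq
    rw [fin_neg_one_eq] at this
    have : i = v := by linear_combination this
    exact hiv this
  have heq : v + 1 + (k : Fin m) = i := by
    rw [hkdef, Fin.cast_val_eq_self]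
    ring
  have hmem : some (v + 1 + (k : Fin m)) ∈ Sᶜ := by rw [heq]; exact hi
  have := claim k hklt hmem
  have heq2 : (⟨some (v + 1 + (k : Fin m)), hmem⟩ : ↥Sᶜ) = ⟨some i, hi⟩ := by simp [heq]
  rwa [heq2] at this

lemma induce_conn {m : ℕ} [NeZero m] (hm : 3 ≤ m) (G : SimpleGraph (Option (Fin m)))
    (hcyc : ∀ i : Fin m, G.Adj (some i) (some (i + 1)))
    (S : Set (Option (Fin m))) (v c : Fin m)
    (hSv : ∀ i : Fin m, i ≠ v → some i ∉ S)
    (hc : c ≠ v) (hnc : G.Adj none (some c)) :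
    (G.induce Sᶜ).Connected := by
  rw [connected_iff_exists_forall_reachable]
  have hv1 : v + 1 ≠ v := fin_add_one_ne (by omega) v
  have h1 : some (v + 1) ∈ Sᶜ := hSv _ hv1
  refine ⟨⟨some (v + 1), h1⟩, ?_⟩
  rintro ⟨w, hw⟩
  match w with
  | some i =>
    by_cases hiv : i = v
    · subst hiv
      have hadj : (G.induce Sᶜ).Adj ⟨some (i + 1), h1⟩ ⟨some i, hw⟩ := (hcyc i).symm
      exact hadj.reachable
    · exact induce_reach hm G hcyc S v hSv i hiv hw h1
  | none =>
    have hcS : some c ∈ Sᶜ := hSv _ hc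
    have r1 := induce_reach hm G hcyc S v hSv c hc hcS h1
    have hadj : (G.induce Sᶜ).Adj ⟨some c, hcS⟩ ⟨none, hw⟩ := hnc.symm
    exact r1.trans hadj.reachable

end Aux

open SimpleGraph
/-- For even `n ≥ 6`, the graph obtained from a cycle on `n-1` vertices by adding
one extra vertex joined to two non-adjacent cycle vertices is 2-connected but has
no spanning bipartite 2-connected subgraph (so `f(2,n) ≥ 3` for even `n ≥ 6`).
The extra vertex is `none` and the cycle vertices are `some i`. -/
theorem even_example_no_spanning_bipartite_two_connected (n : ℕ) (hn : 6 ≤ n) (heven : Even n)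
    (a b : Fin (n - 1)) (hab : a ≠ b)
    (hnadj : ¬ (SimpleGraph.cycleGraph (n - 1)).Adj a b)
    (G : SimpleGraph (Option (Fin (n - 1))))
    (hG : G = SimpleGraph.fromRel (fun x y =>
      (∃ i j, x = some i ∧ y = some j ∧ (SimpleGraph.cycleGraph (n - 1)).Adj i j) ∨
      (x = none ∧ (y = some a ∨ y = some b)))) :
    IsKConnected G 2 ∧
      ¬ ∃ H : SimpleGraph (Option (Fin (n - 1))), H ≤ G ∧
          H.Colorable 2 ∧ IsKConnected H 2 := by
  have hm5 : 5 ≤ n - 1 := by omega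
  haveI : NeZero (n - 1) := ⟨by omega⟩
  have hmodd : Odd (n - 1) := Nat.Even.sub_odd (by omega) heven odd_one
  have hGadj : ∀ x y, G.Adj x y ↔ x ≠ y ∧
      (((∃ i j, x = some i ∧ y = some j ∧ (cycleGraph (n - 1)).Adj i j) ∨
        (x = none ∧ (y = some a ∨ y = some b))) ∨
       ((∃ i j, y = some i ∧ x = some j ∧ (cycleGraph (n - 1)).Adj i j) ∨
        (y = none ∧ (x = some a ∨ x = some b)))) := by
    subst hG
    intro x y
    exact SimpleGraph.fromRel_adj _ _ _
  have hcycadj : ∀ i : Fin (n - 1), (cycleGraph (n - 1)).Adj i (i + 1) := by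
    intro i
    rw [cycleGraph_adj']
    right
    have : i + 1 - i = 1 := by ring
    rw [this, fin_val_one' (by omega)]
  have hcycG : ∀ i : Fin (n - 1), G.Adj (some i) (some (i + 1)) := by
    intro i
    rw [hGadj]
    refine ⟨?_, Or.inl (Or.inl ⟨i, i + 1, rfl, rfl, hcycadj i⟩)⟩
    simp only [ne_eq, Option.some.injEq]
    exact fun h => fin_add_one_ne (by omega) i h.symm
  have hnoneA : G.Adj none (some a) := by
    rw [hGadj]
    exact ⟨by simp, Or.inl (Or.inr ⟨rfl, Or.inl rfl⟩)⟩
  have hnoneB : G.Adj none (some b) := by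
    rw [hGadj]
    exact ⟨by simp, Or.inl (Or.inr ⟨rfl, Or.inr rfl⟩)⟩
  have hGnbr : ∀ u : Fin (n - 1), u ≠ a → u ≠ b → ∀ x, G.Adj (some u) x →
      x = some (u + 1) ∨ x = some (u - 1) := by
    intro u hua hub x hadj
    rw [hGadj] at hadj
    obtain ⟨hne, hrel⟩ := hadj
    have hcycle : ∃ j, x = some j ∧ (cycleGraph (n - 1)).Adj u j := by
      rcases hrel with (⟨i, j, hi, hj, hij⟩ | ⟨hnone, _⟩) |
        (⟨i, j, hi, hj, hij⟩ | ⟨hnone, hy⟩)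
      · have := Option.some.inj hi
        exact ⟨j, hj, by rwa [this]⟩
      · exact absurd hnone (by simp)
      · have := Option.some.inj hj
        exact ⟨i, hi, by rw [this]; exact hij.symm⟩
      · rcases hy with h | h
        · exact absurd (Option.some.inj h) hua
        · exact absurd (Option.some.inj h) hub
    obtain ⟨j, hx, hadj⟩ := hcycle
    rw [cycleGraph_adj'] at hadj
    rcases hadj with h | h
    · right
      rw [hx]
      have huj : u - j = 1 := by
        apply Fin.ext
        rw [fin_val_one' (by omega)]
        exact h
      have : j = u - 1 := by linear_combination -huj
      rw [this]
    · left
      rw [hx]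
      have huj : j - u = 1 := by
        apply Fin.ext
        rw [fin_val_one' (by omega)]
        exact h
      have : j = u + 1 := by linear_combination huj
      rw [this]
  constructor
  · constructor
    · rw [Nat.card_eq_fintype_card, Fintype.card_option, Fintype.card_fin]
      omega
    · intro S hS
      have haa1 : a ≠ a + 1 := fun h => fin_add_one_ne (by omega) a h.symm
      rcases (by omega : S.ncard = 0 ∨ S.ncard = 1) with h0 | h1
      · have hSe : S = ∅ := (Set.ncard_eq_zero (Set.toFinite S)).mp h0
        subst hSe
        exact induce_conn (by omega) G hcycG ∅ (a + 1) a (by simp) haa1 hnoneA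
      · obtain ⟨x, hx⟩ := Set.ncard_eq_one.mp h1
        subst hx
        match x with
        | none =>
          exact induce_conn (by omega) G hcycG {none} (a + 1) a (by simp) haa1 hnoneA
        | some v =>
          by_cases hva : v = a
          · subst hva
            exact induce_conn (by omega) G hcycG {some v} v b
              (by intro i hi; simp [hi]) hab.symm hnoneB
          · exact induce_conn (by omega) G hcycG {some v} v a
              (by intro i hi; simp [hi]) (Ne.symm hva) hnoneA
  · rintro ⟨H, hHG, hcol, hH2⟩
    have hmd := two_connected_min_degree hH2
    have hboth : ∀ u : Fin (n - 1), u ≠ a → u ≠ b →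
        H.Adj (some u) (some (u + 1)) ∧ H.Adj (some u) (some (u - 1)) := by
      intro u hua hub
      obtain ⟨y, z, hyz, hy, hz⟩ := hmd (some u)
      have hy' := hGnbr u hua hub y (hHG hy)
      have hz' := hGnbr u hua hub z (hHG hz)
      have hne2 : some (u + 1) ≠ (some (u - 1) : Option (Fin (n - 1))) := by
        simp only [ne_eq, Option.some.injEq]
        intro h
        have h2 : ((2 : ℕ) : Fin (n - 1)) = 0 := by push_cast; linear_combination h
        exact fin_cast_ne_zero 2 (by omega) (by omega) h2
      rcases hy' with h1 | h1 <;> rcases hz' with h2 | h2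
      · exact absurd (h1.trans h2.symm) hyz
      · exact ⟨h1 ▸ hy, h2 ▸ hz⟩
      · exact ⟨h2 ▸ hz, h1 ▸ hy⟩
      · exact absurd (h1.trans h2.symm) hyz
    have hcycH : ∀ i : Fin (n - 1), H.Adj (some i) (some (i + 1)) := by
      intro i
      by_cases hia : i = a
      · have h1 : i + 1 ≠ a := by rw [hia]; exact fin_add_one_ne (by omega) a
        have h2 : i + 1 ≠ b := by
          intro h
          apply hnadj
          rw [cycleGraph_adj']
          right
          have : b - a = 1 := by rw [← h, hia]; ring
          rw [this, fin_val_one' (by omega)]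
        have := (hboth (i + 1) h1 h2).2
        have heq : i + 1 - 1 = i := by ring
        rw [heq] at this
        exact this.symm
      · by_cases hib : i = b
        · have h1 : i + 1 ≠ b := by rw [hib]; exact fin_add_one_ne (by omega) b
          have h2 : i + 1 ≠ a := by
            intro h
            apply hnadj
            rw [cycleGraph_adj']
            left
            have : a - b = 1 := by rw [← h, hib]; ring
            rw [this, fin_val_one' (by omega)]
          have := (hboth (i + 1) h2 h1).2
          have heq : i + 1 - 1 = i := by ring
          rw [heq] at this
          exact this.symm
        · exact (hboth i hia hib).1
    obtain ⟨p, hp⟩ := closed_walk_of_cycle_edges H (fun i => some i) hcycH 0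
    have h3 := Walk.three_le_chromaticNumber_of_odd_loop p (by rw [hp]; exact hmodd)
    have h2 := hcol.chromaticNumber_le
    have : (3 : ℕ∞) ≤ 2 := le_trans h3 (by exact_mod_cast h2)
    norm_num at this
end

section
/- Let r ≥ 2 and k ≥ 1 be integers. If a graph G has edge-connectivity strictly greater than r(k−1)/(r−1), then G has a spanning subgraph H with chromatic number at most r such that H is k-edge-connected. In particular, any partition of V(G) into r parts maximizing the number of crossing edges yields such a subgraph. -/
/-- A graph is `t`-edge-connected if every nonempty proper vertex subset has at
least `t` edges leaving it. -/
def IsKEdgeConnected {V : Type*} (G : SimpleGraph V) (t : ℕ) : Prop :=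
  ∀ S : Set V, S.Nonempty → S ≠ Set.univ →
    t ≤ {e ∈ G.edgeSet | ∃ a b, e = s(a, b) ∧ a ∈ S ∧ b ∉ S}.ncard

/-- The spanning subgraph of `G` consisting of the edges crossing the partition
of the vertices into `r` parts given by the coloring `f`. -/
def cutGraph {V : Type*} (G : SimpleGraph V) {r : ℕ} (f : V → Fin r) : SimpleGraph V where
  Adj a b := G.Adj a b ∧ f a ≠ f b
  symm := ⟨fun _ _ h => ⟨h.1.symm, h.2.symm⟩⟩
  loopless := ⟨fun a h => G.loopless.irrefl a h.1⟩

/-- If the edge-connectivity of `G` is strictly greater than `r(k-1)/(r-1)`, then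
`G` has a spanning `r`-colorable `k`-edge-connected subgraph; in particular, any
partition of `V(G)` into `r` parts maximizing the number of crossing edges yields
such a subgraph. -/
theorem max_r_cut_edge_connected (r k : ℕ) (hr : 2 ≤ r) (hk : 1 ≤ k)
    (V : Type) [Fintype V] (G : SimpleGraph V)
    (hG : ∀ S : Set V, S.Nonempty → S ≠ Set.univ →
      (r : ℝ) * ((k : ℝ) - 1) / ((r : ℝ) - 1) <
        ({e ∈ G.edgeSet | ∃ a b, e = s(a, b) ∧ a ∈ S ∧ b ∉ S}.ncard : ℝ)) :
    (∃ H : SimpleGraph V, H ≤ G ∧ H.Colorable r ∧ IsKEdgeConnected H k) ∧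
    ∀ f : V → Fin r,
      (∀ g : V → Fin r, (cutGraph G g).edgeSet.ncard ≤ (cutGraph G f).edgeSet.ncard) →
      cutGraph G f ≤ G ∧ (cutGraph G f).Colorable r ∧ IsKEdgeConnected (cutGraph G f) k := by
  classical
  haveI : NeZero r := ⟨by omega⟩
  suffices key : ∀ f : V → Fin r,
      (∀ g : V → Fin r, (cutGraph G g).edgeSet.ncard ≤ (cutGraph G f).edgeSet.ncard) →
      cutGraph G f ≤ G ∧ (cutGraph G f).Colorable r ∧ IsKEdgeConnected (cutGraph G f) k by
    refine ⟨?_, key⟩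
    haveI : Nonempty (Fin r) := ⟨⟨0, by omega⟩⟩
    obtain ⟨f, hf⟩ := Finite.exists_max (fun g : V → Fin r => (cutGraph G g).edgeSet.ncard)
    obtain ⟨h1, h2, h3⟩ := key f hf
    exact ⟨cutGraph G f, h1, h2, h3⟩
  intro f hmax
  refine ⟨fun a b h => h.1, ⟨SimpleGraph.Coloring.mk f fun h => h.2⟩, ?_⟩
  intro S hS hSu
  -- notation
  set Cr : Sym2 V → Prop := fun e => ∃ a b, e = s(a, b) ∧ a ∈ S ∧ b ∉ S with hCrdef
  set P : Fin r → Sym2 V → Prop :=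
    fun s e => ∃ a b, e = s(a, b) ∧ a ∈ S ∧ b ∉ S ∧ f a + s ≠ f b with hPdef
  set fs : Fin r → V → Fin r := fun s v => if v ∈ S then f v + s else f v with hfsdef
  have hf0 : fs 0 = f := funext fun v => by simp [hfsdef]
  have hcnt : ∀ A : Set (Sym2 V), A.ncard = (Finset.univ.filter (· ∈ A)).card := by
    intro A
    rw [← Set.ncard_coe_finset]
    congr 1
    ext e
    simp
  set cutF : (V → Fin r) → Finset (Sym2 V) :=
    fun g => Finset.univ.filter (fun e => e ∈ (cutGraph G g).edgeSet) with hcutFdef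
  set crossF : Finset (Sym2 V) :=
    Finset.univ.filter (fun e => e ∈ G.edgeSet ∧ Cr e) with hcrossFdef
  set Cs : Fin r → Finset (Sym2 V) := fun s => crossF.filter (fun e => P s e) with hCsdef
  -- pointwise lemmas
  have h2 : ∀ (s : Fin r) (a b : V), ¬ Cr s(a, b) →
      (s(a, b) ∈ (cutGraph G (fs s)).edgeSet ↔ s(a, b) ∈ (cutGraph G f).edgeSet) := by
    intro s a b hne
    have hab : a ∈ S ↔ b ∈ S := by
      constructor
      · intro h; by_contra hb; exact hne ⟨a, b, rfl, h, hb⟩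
      · intro h; by_contra ha; exact hne ⟨b, a, Sym2.eq_swap.symm, h, ha⟩
    simp only [SimpleGraph.mem_edgeSet, cutGraph]
    by_cases hmem : a ∈ S
    · have hb := hab.1 hmem
      simp [hfsdef, hmem, hb]
    · have hb : b ∉ S := fun h => hmem (hab.2 h)
      simp [hfsdef, hmem, hb]
  have h3 : ∀ (s : Fin r) (a b : V),
      (s(a, b) ∈ (cutGraph G (fs s)).edgeSet ∧ Cr s(a, b)) ↔
      ((s(a, b) ∈ G.edgeSet ∧ Cr s(a, b)) ∧ P s s(a, b)) := by
    intro s a b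
    simp only [SimpleGraph.mem_edgeSet, cutGraph]
    constructor
    · rintro ⟨⟨hadj, hne⟩, hcr⟩
      refine ⟨⟨hadj, hcr⟩, ?_⟩
      obtain ⟨a', b', heq, ha', hb'⟩ := hcr
      rcases Sym2.eq_iff.mp heq with ⟨h1, h2⟩ | ⟨h1, h2⟩
      · subst h1; subst h2
        simp only [hfsdef, if_pos ha', if_neg hb'] at hne
        exact ⟨a, b, rfl, ha', hb', hne⟩
      · subst h1; subst h2
        simp only [hfsdef, if_pos ha', if_neg hb'] at hne
        exact ⟨b, a, Sym2.eq_swap.symm, ha', hb', (Ne.symm hne)⟩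
    · rintro ⟨⟨hadj, hcr⟩, a', b', heq, ha', hb', hne⟩
      refine ⟨⟨hadj, ?_⟩, hcr⟩
      rcases Sym2.eq_iff.mp heq with ⟨h1, h2⟩ | ⟨h1, h2⟩
      · subst h1; subst h2
        simpa [hfsdef, if_pos ha', if_neg hb'] using hne
      · subst h1; subst h2
        simpa [hfsdef, if_pos ha', if_neg hb'] using hne.symm
  -- the crossing part of the cut of fs s is Cs s
  have hcross : ∀ s : Fin r, (cutF (fs s)).filter Cr = Cs s := by
    intro s
    ext e
    induction e using Sym2.ind with
    | _ a b =>
      simp only [hCsdef, hcutFdef, hcrossFdef, Finset.mem_filter, Finset.mem_univ, true_and,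
        and_assoc]
      constructor
      · rintro ⟨hc, hcr⟩
        obtain ⟨⟨h1, h2⟩, h3⟩ := (h3 s a b).mp ⟨hc, hcr⟩
        exact ⟨h1, h2, h3⟩
      · rintro ⟨h1, h2, hP⟩
        obtain ⟨hc, hcr⟩ := (h3 s a b).mpr ⟨⟨h1, h2⟩, hP⟩
        exact ⟨hc, hcr⟩
  -- the non-crossing part is unchanged
  have hsame : ∀ s : Fin r, (cutF (fs s)).filter (fun e => ¬ Cr e)
      = (cutF f).filter (fun e => ¬ Cr e) := by
    intro s
    ext e
    induction e using Sym2.ind with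
    | _ a b =>
      simp only [hcutFdef, Finset.mem_filter, Finset.mem_univ, true_and]
      constructor
      · rintro ⟨hc, hcr⟩; exact ⟨(h2 s a b hcr).mp hc, hcr⟩
      · rintro ⟨hc, hcr⟩; exact ⟨(h2 s a b hcr).mpr hc, hcr⟩
  have hcutcard : ∀ g : V → Fin r, (cutGraph G g).edgeSet.ncard = (cutF g).card := by
    intro g
    rw [hcnt, hcutFdef]
    congr 1
    ext e
    simp
  have hCf : (cutF f).filter Cr = Cs 0 := by rw [← hf0]; exact hcross 0
  -- maximality gives (Cs s).card ≤ (Cs 0).card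
  have hCsle : ∀ s : Fin r, (Cs s).card ≤ (Cs 0).card := by
    intro s
    have h1 := hmax (fs s)
    rw [hcutcard, hcutcard] at h1
    have e1 := Finset.card_filter_add_card_filter_not (s := cutF (fs s)) (p := Cr)
    have e2 := Finset.card_filter_add_card_filter_not (s := cutF f) (p := Cr)
    rw [hcross s, hsame s] at e1
    rw [hCf] at e2
    omega
  -- counting: for each crossing edge, exactly r - 1 shifts cut it
  have hcount : ∀ e ∈ crossF, (Finset.univ.filter (fun s : Fin r => P s e)).card = r - 1 := by
    intro e he
    simp only [hcrossFdef, Finset.mem_filter, Finset.mem_univ, true_and] at he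
    obtain ⟨hGe, a, b, rfl, haS, hbS⟩ := he
    have hPiff : ∀ s : Fin r, P s s(a, b) ↔ f a + s ≠ f b := by
      intro s
      constructor
      · rintro ⟨a', b', heq, ha', hb', hne⟩
        rcases Sym2.eq_iff.mp heq with ⟨h1, h2⟩ | ⟨h1, h2⟩
        · subst h1; subst h2; exact hne
        · subst h1; subst h2; exact absurd haS hb'
      · intro h; exact ⟨a, b, rfl, haS, hbS, h⟩
    have hfe : (Finset.univ.filter (fun s : Fin r => P s s(a, b)))
        = Finset.univ \ {f b - f a} := by
      ext s
      simp only [Finset.mem_filter, Finset.mem_univ, true_and, Finset.mem_sdiff,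
        Finset.mem_singleton, hPiff s]
      exact not_congr eq_sub_iff_add_eq'.symm
    rw [hfe, Finset.card_sdiff_of_subset (by simp)]
    simp
  -- double counting
  have hsum : crossF.card * (r - 1) ≤ r * (Cs 0).card := by
    have h1 : ∑ s : Fin r, (Cs s).card ≤ ∑ _s : Fin r, (Cs 0).card :=
      Finset.sum_le_sum (fun s _ => hCsle s)
    have h2 : ∑ _s : Fin r, (Cs 0).card = r * (Cs 0).card := by
      simp [Finset.sum_const, Finset.card_univ, mul_comm]
    have h3 : ∑ s : Fin r, (Cs s).card = crossF.card * (r - 1) := by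
      have e1 : ∀ s : Fin r, (Cs s).card = ∑ e ∈ crossF, if P s e then 1 else 0 :=
        fun s => Finset.card_filter _ _
      rw [Finset.sum_congr rfl (fun s _ => e1 s), Finset.sum_comm]
      rw [Finset.sum_congr rfl (fun e he =>
        show (∑ s : Fin r, if P s e then 1 else 0) = r - 1 by
          rw [← hcount e he, Finset.card_filter])]
      rw [Finset.sum_const, smul_eq_mul]
    omega
  -- conclude with real arithmetic
  have hne : {e ∈ G.edgeSet | ∃ a b, e = s(a, b) ∧ a ∈ S ∧ b ∉ S}.ncard = crossF.card := by
    rw [hcnt]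
    congr 1
    ext e
    simp [hcrossFdef, hCrdef]
  have hEc := hG S hS hSu
  rw [hne] at hEc
  have hr1 : (1 : ℝ) < (r : ℝ) := by exact_mod_cast by omega
  have h4 : (r : ℝ) * ((k : ℝ) - 1) < (crossF.card : ℝ) * ((r : ℝ) - 1) := by
    rw [div_lt_iff₀ (by linarith)] at hEc
    exact hEc
  have h5 : (crossF.card : ℝ) * ((r : ℝ) - 1) ≤ (r : ℝ) * ((Cs 0).card : ℝ) := by
    have := (Nat.cast_le (α := ℝ)).mpr hsum
    push_cast [Nat.cast_sub (show 1 ≤ r by omega)] at this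
    linarith
  have h6 : (k : ℝ) - 1 < ((Cs 0).card : ℝ) := by
    have hrpos : (0 : ℝ) < (r : ℝ) := by linarith
    nlinarith
  have h7 : k ≤ (Cs 0).card := by
    have : (k : ℝ) < ((Cs 0).card : ℝ) + 1 := by linarith
    exact_mod_cast Nat.lt_succ_iff.mp (by exact_mod_cast this)
  calc k ≤ (Cs 0).card := h7
    _ = ((cutF f).filter Cr).card := by rw [hCf]
    _ = {e ∈ (cutGraph G f).edgeSet | ∃ a b, e = s(a, b) ∧ a ∈ S ∧ b ∉ S}.ncard := by
        rw [hcnt]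
        congr 1
        ext e
        simp [hcutFdef, hCrdef]
end

section
/- Let k ≥ 1 and let G be a (2k−1)-edge-connected graph. Then every maximum edge cut of G, regarded as a spanning bipartite subgraph of G, is k-edge-connected. -/
lemma fin2_succ_ne_iff (x y : Fin 2) : x + 1 ≠ y ↔ x = y := by revert x y; decide

lemma fin2_ne_succ_iff (x y : Fin 2) : x ≠ y + 1 ↔ x = y := by revert x y; decide

lemma fin2_succ_ne_succ_iff (x y : Fin 2) : x + 1 ≠ y + 1 ↔ x ≠ y := by revert x y; decide

lemma mem_crossSet {V : Type} {H : SimpleGraph V} {S : Set V} {a b : V} :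
    s(a,b) ∈ {e ∈ H.edgeSet | ∃ x y, e = s(x,y) ∧ x ∈ S ∧ y ∉ S} ↔
      H.Adj a b ∧ ((a ∈ S ∧ b ∉ S) ∨ (b ∈ S ∧ a ∉ S)) := by
  constructor
  · rintro ⟨hadj, x, y, heq, hx, hy⟩
    refine ⟨hadj, ?_⟩
    rw [Sym2.eq_iff] at heq
    rcases heq with ⟨rfl, rfl⟩ | ⟨rfl, rfl⟩
    · exact Or.inl ⟨hx, hy⟩
    · exact Or.inr ⟨hx, hy⟩
  · rintro ⟨hadj, ⟨hx, hy⟩ | ⟨hx, hy⟩⟩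
    · exact ⟨hadj, a, b, rfl, hx, hy⟩
    · exact ⟨hadj, b, a, Sym2.eq_swap.symm, hx, hy⟩

lemma mem_neSet {V : Type} {H : SimpleGraph V} {S : Set V} {f : V → Fin 2} {a b : V} :
    s(a,b) ∈ {e ∈ H.edgeSet | ∃ x y, e = s(x,y) ∧ x ∈ S ∧ y ∉ S ∧ f x = f y} ↔
      H.Adj a b ∧ f a = f b ∧ ((a ∈ S ∧ b ∉ S) ∨ (b ∈ S ∧ a ∉ S)) := by
  constructor
  · rintro ⟨hadj, x, y, heq, hx, hy, hf⟩
    refine ⟨hadj, ?_⟩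
    rw [Sym2.eq_iff] at heq
    rcases heq with ⟨rfl, rfl⟩ | ⟨rfl, rfl⟩
    · exact ⟨hf, Or.inl ⟨hx, hy⟩⟩
    · exact ⟨hf.symm, Or.inr ⟨hx, hy⟩⟩
  · rintro ⟨hadj, hf, ⟨hx, hy⟩ | ⟨hx, hy⟩⟩
    · exact ⟨hadj, a, b, rfl, hx, hy, hf⟩
    · exact ⟨hadj, b, a, Sym2.eq_swap.symm, hx, hy, hf.symm⟩

/-- If `G` is `(2k-1)`-edge-connected, then every maximum edge cut of `G`,
regarded as a spanning bipartite subgraph, is `k`-edge-connected. -/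
theorem max_cut_edge_connected (k : ℕ) (hk : 1 ≤ k) (V : Type) [Fintype V]
    (G : SimpleGraph V) (hG : IsKEdgeConnected G (2 * k - 1))
    (f : V → Fin 2)
    (hmax : ∀ g : V → Fin 2, (cutGraph G g).edgeSet.ncard ≤ (cutGraph G f).edgeSet.ncard) :
    cutGraph G f ≤ G ∧ (cutGraph G f).Colorable 2 ∧ IsKEdgeConnected (cutGraph G f) k := by
  classical
  refine ⟨fun a b h => h.1, ⟨SimpleGraph.Coloring.mk f fun h => h.2⟩, ?_⟩
  intro S hS hSne
  set CE := {e ∈ (cutGraph G f).edgeSet | ∃ a b, e = s(a, b) ∧ a ∈ S ∧ b ∉ S} with hCE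
  set NE := {e ∈ G.edgeSet | ∃ a b, e = s(a, b) ∧ a ∈ S ∧ b ∉ S ∧ f a = f b} with hNE
  have hCEsub : CE ⊆ (cutGraph G f).edgeSet := fun e he => he.1
  -- disjointness of NE from the cut edge set
  have hdisj2 : Disjoint (cutGraph G f).edgeSet NE := by
    rw [Set.disjoint_left]
    intro e he hne
    induction e using Sym2.ind with
    | _ a b =>
      rw [hNE, mem_neSet] at hne
      exact ((cutGraph G f).mem_edgeSet.mp he).2 hne.2.1
  -- crossing edges of G split
  have hsplit : {e ∈ G.edgeSet | ∃ a b, e = s(a, b) ∧ a ∈ S ∧ b ∉ S} = CE ∪ NE := by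
    ext e
    induction e using Sym2.ind with
    | _ a b =>
      rw [Set.mem_union, hCE, hNE, mem_crossSet, mem_crossSet, mem_neSet]
      constructor
      · rintro ⟨hadj, hcross⟩
        by_cases hf : f a = f b
        · exact Or.inr ⟨hadj, hf, hcross⟩
        · exact Or.inl ⟨⟨hadj, hf⟩, hcross⟩
      · rintro (⟨⟨hadj, _⟩, hcross⟩ | ⟨hadj, _, hcross⟩) <;> exact ⟨hadj, hcross⟩
  -- the flipped coloring
  set g : V → Fin 2 := fun v => if v ∈ S then f v + 1 else f v with hg
  have hkey : (cutGraph G g).edgeSet = ((cutGraph G f).edgeSet \ CE) ∪ NE := by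
    ext e
    induction e using Sym2.ind with
    | _ a b =>
      rw [Set.mem_union, Set.mem_diff, hCE, hNE, mem_crossSet, mem_neSet,
        SimpleGraph.mem_edgeSet (G := cutGraph G g), SimpleGraph.mem_edgeSet (G := cutGraph G f)]
      show (G.Adj a b ∧ g a ≠ g b) ↔
        ((G.Adj a b ∧ f a ≠ f b) ∧ ¬((G.Adj a b ∧ f a ≠ f b) ∧ ((a ∈ S ∧ b ∉ S) ∨ (b ∈ S ∧ a ∉ S))))
          ∨ (G.Adj a b ∧ f a = f b ∧ ((a ∈ S ∧ b ∉ S) ∨ (b ∈ S ∧ a ∉ S)))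
      simp only [hg]
      by_cases ha : a ∈ S <;> by_cases hb : b ∈ S
      · rw [if_pos ha, if_pos hb, fin2_succ_ne_succ_iff]
        have hC : ¬((a ∈ S ∧ b ∉ S) ∨ (b ∈ S ∧ a ∉ S)) := by tauto
        tauto
      · rw [if_pos ha, if_neg hb, fin2_succ_ne_iff]
        have hC : (a ∈ S ∧ b ∉ S) ∨ (b ∈ S ∧ a ∉ S) := Or.inl ⟨ha, hb⟩
        tauto
      · rw [if_neg ha, if_pos hb, fin2_ne_succ_iff]
        have hC : (a ∈ S ∧ b ∉ S) ∨ (b ∈ S ∧ a ∉ S) := Or.inr ⟨hb, ha⟩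
        tauto
      · rw [if_neg ha, if_neg hb]
        have hC : ¬((a ∈ S ∧ b ∉ S) ∨ (b ∈ S ∧ a ∉ S)) := by tauto
        tauto
  have hfin : ∀ T : Set (Sym2 V), T.Finite := fun T => T.toFinite
  have hle : CE.ncard ≤ (cutGraph G f).edgeSet.ncard :=
    Set.ncard_le_ncard hCEsub (hfin _)
  have hcard : (cutGraph G g).edgeSet.ncard =
      ((cutGraph G f).edgeSet.ncard - CE.ncard) + NE.ncard := by
    rw [hkey, Set.ncard_union_eq (Set.disjoint_of_subset Set.diff_subset le_rfl hdisj2)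
      (hfin _) (hfin _), Set.ncard_diff hCEsub (hfin _)]
  have hGS := hG S hS hSne
  rw [hsplit, Set.ncard_union_eq (Set.disjoint_of_subset hCEsub le_rfl hdisj2)
    (hfin _) (hfin _)] at hGS
  have hm := hmax g
  rw [hcard] at hm
  omega
end

section
/- In a t-connected graph G, for any two distinct vertices a and b there exist t−1 paths connecting a and b, each of length at least two, such that any two of these paths are internally vertex-disjoint. -/
open List

variable {V : Type}

section ListHelpers

variable {r : V → V → Prop}

lemma head?_of_prefix {l₁ l₂ : List V} (h : l₁ <+: l₂) (hne : l₁ ≠ []) :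
    l₁.head? = l₂.head? := by
  obtain ⟨t, rfl⟩ := h
  cases l₁ with
  | nil => exact absurd rfl hne
  | cons a s => simp

lemma getLast?_of_suffix {l₁ l₂ : List V} (h : l₁ <:+ l₂) (hne : l₁ ≠ []) :
    l₁.getLast? = l₂.getLast? := by
  obtain ⟨t, rfl⟩ := h
  exact (List.getLast?_append_of_ne_nil _ hne).symm

lemma chain'_pair {l : List V} (h : l.Chain' r) {u v : V} (hu : l.head? = some u)
    (hv : l.tail.head? = some v) : r u v := by
  cases l with
  | nil => simp at hu
  | cons a t =>
    cases t with
    | nil => simp at hv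
    | cons b t' =>
      simp at hu hv
      subst hu; subst hv
      exact h.rel_head

lemma chain'_glue {l₁ l₂ : List V} (h₁ : l₁.Chain' r) (h₂ : l₂.Chain' r)
    (h : l₁.getLast? = l₂.head?) : (l₁ ++ l₂.tail).Chain' r := by
  rw [List.Chain', List.isChain_append]
  refine ⟨h₁, h₂.tail, ?_⟩
  intro a ha b hb
  exact chain'_pair h₂ (by rw [← h]; exact ha) hb

lemma glue_getLast? {l₁ l₂ : List V} (h1 : l₁ ≠ []) (h : l₁.getLast? = l₂.head?)
    (h2 : l₂ ≠ []) : (l₁ ++ l₂.tail).getLast? = l₂.getLast? := by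
  cases l₂ with
  | nil => exact absurd rfl h2
  | cons a t =>
    cases t with
    | nil => simpa using h
    | cons b t' =>
      rw [List.getLast?_append_of_ne_nil _ (by simp)]
      rfl

lemma Chain'.of_suffix {l₁ l₂ : List V} (h : l₂.Chain' r) (hs : l₁ <:+ l₂) :
    l₁.Chain' r := by
  obtain ⟨t, rfl⟩ := hs
  exact (List.isChain_append.mp h).2.1

lemma chain'_and_mem {P : V → Prop} {l : List V} (h : l.Chain' r) (hm : ∀ v ∈ l, P v) :
    l.Chain' (fun u v => r u v ∧ P u ∧ P v) := by
  rw [List.Chain', List.isChain_iff_getElem] at h ⊢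
  intro i hi
  exact ⟨h i hi, hm _ (List.getElem_mem _), hm _ (List.getElem_mem _)⟩

lemma chain'_zip_pair {l : List V} (h : l.Chain' r) {q : V × V} (hq : q ∈ l.zip l.tail) :
    r q.1 q.2 := by
  rw [List.mem_iff_getElem] at hq
  obtain ⟨i, hi, hEq⟩ := hq
  have hlen : i < l.length - 1 := by
    simpa [List.length_zip, List.length_tail] using hi
  have h1 : l.tail[i]'(by simpa [List.length_tail] using hlen) =
      l[i+1]'(by omega) := List.getElem_tail ..
  rw [List.getElem_zip] at hEq
  have := List.isChain_iff_getElem.mp h i (by omega)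
  rw [← hEq]
  simpa [List.get_eq_getElem, h1] using this

lemma exists_prefix_until (X : Finset V) :
    ∀ l : List V, l.Chain' r → (∃ v ∈ l, v ∈ X) →
    ∃ l₁ w, l₁ <+: l ∧ l₁.Chain' r ∧ l₁.head? = l.head? ∧ l₁ ≠ [] ∧
      l₁.getLast? = some w ∧ w ∈ X ∧ ∀ u ∈ l₁.dropLast, u ∉ X := by
  intro l
  induction l with
  | nil => simp
  | cons a t ih =>
    intro hc hex
    by_cases ha : a ∈ X
    · exact ⟨[a], a, ⟨t, rfl⟩, by simp [List.Chain'], by simp, by simp, by simp, ha, by simp⟩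
    · have hex' : ∃ v ∈ t, v ∈ X := by
        obtain ⟨v, hv, hvX⟩ := hex
        rcases List.mem_cons.mp hv with rfl | hv'
        · exact absurd hvX ha
        · exact ⟨v, hv', hvX⟩
      obtain ⟨l₁, w, hpre, hch, hhead, hne, hlast, hwx, hdrop⟩ := ih hc.tail hex'
      refine ⟨a :: l₁, w, ?_, ?_, rfl, by simp, ?_, hwx, ?_⟩
      · obtain ⟨s, rfl⟩ := hpre
        exact ⟨s, rfl⟩
      · rw [List.Chain', List.isChain_cons]
        refine ⟨?_, hch⟩
        intro b hb
        have : t.head? = some b := by rw [← hhead]; exact hb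
        exact chain'_pair hc rfl this
      · rw [show a :: l₁ = [a] ++ l₁ from rfl, List.getLast?_append_of_ne_nil _ hne]
        exact hlast
      · intro u hu
        rw [List.dropLast_cons_of_ne_nil hne] at hu
        rcases List.mem_cons.mp hu with rfl | hu'
        · exact ha
        · exact hdrop u hu'

lemma exists_suffix_from (X : Finset V) {l : List V} (hc : l.Chain' r)
    (hex : ∃ v ∈ l, v ∈ X) :
    ∃ l₂ w, l₂ <:+ l ∧ l₂.Chain' r ∧ l₂.getLast? = l.getLast? ∧ l₂ ≠ [] ∧
      l₂.head? = some w ∧ w ∈ X ∧ ∀ u ∈ l₂.tail, u ∉ X := by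
  have hc' : l.reverse.Chain' (flip r) := by
    rw [List.Chain', List.isChain_reverse]; exact hc
  obtain ⟨l₁, w, hpre, hch, hhead, hne, hlast, hwx, hdrop⟩ :=
    exists_prefix_until (r := flip r) X l.reverse hc' (by simpa using hex)
  have htail : l₁.reverse.tail = l₁.dropLast.reverse := by
    conv_lhs => rw [← List.dropLast_append_getLast hne]
    rw [List.reverse_append]
    simp
  refine ⟨l₁.reverse, w, ?_, ?_, ?_, by simpa using hne, ?_, hwx, ?_⟩
  · simpa using List.reverse_suffix.mpr hpre
  · rw [List.Chain', List.isChain_reverse]; exact hch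
  · rw [List.getLast?_reverse, hhead, List.head?_reverse]
  · rw [List.head?_reverse]; exact hlast
  · intro u hu
    rw [htail] at hu
    exact hdrop u (by simpa using hu)

lemma head?_dropWhile_ne [DecidableEq V] {l : List V} {v : V} (h : v ∈ l) :
    (l.dropWhile (fun z => z ≠ v)).head? = some v := by
  induction l with
  | nil => simp at h
  | cons a t ih =>
    by_cases hav : a = v
    · subst hav; simp [List.dropWhile_cons]
    · have hv : v ∈ t := by
        rcases List.mem_cons.mp h with rfl | h'
        · exact absurd rfl hav
        · exact h'
      have heq : (a :: t).dropWhile (fun z => z ≠ v) = t.dropWhile (fun z => z ≠ v) := by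
        rw [List.dropWhile_cons]
        simp [hav]
      rw [heq]
      exact ih hv

end ListHelpers
section DMenger

variable [Fintype V] [DecidableEq V]

def ER (E : Finset (V × V)) : V → V → Prop := fun u v => (u, v) ∈ E

def Starts (A : Finset V) (l : List V) : Prop := ∃ u ∈ A, l.head? = some u

def Ends (B : Finset V) (l : List V) : Prop := ∃ v ∈ B, l.getLast? = some v

def DSep (E : Finset (V × V)) (A B S : Finset V) : Prop :=
  ∀ l : List V, l.Chain' (ER E) → Starts A l → Ends B l → ∃ s ∈ S, s ∈ l

lemma starts_ne_nil {A : Finset V} {l : List V} (h : Starts A l) : l ≠ [] := by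
  obtain ⟨u, _, hh⟩ := h
  intro hl
  rw [hl] at hh
  simp at hh

lemma dmenger_empty (A B : Finset V) (k : ℕ)
    (hsep : ∀ S : Finset V, DSep (∅ : Finset (V × V)) A B S → k ≤ S.card) :
    ∃ P : Fin k → List V,
      (∀ i, (P i).Chain' (ER (∅ : Finset (V × V))) ∧ (P i).Nodup ∧
        Starts A (P i) ∧ Ends B (P i)) ∧
      (∀ i j, i ≠ j → ∀ v, v ∈ P i → v ∉ P j) := by
  have hAB : DSep ∅ A B (A ∩ B) := by
    rintro l hc ⟨u, hu, hh⟩ ⟨v, hv, hL⟩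
    cases l with
    | nil => simp at hh
    | cons a t =>
      cases t with
      | cons b t' => exact absurd (List.isChain_cons_cons.mp hc).1 (by simp [ER])
      | nil =>
        simp at hh hL
        refine ⟨a, ?_, by simp⟩
        rw [Finset.mem_inter]
        exact ⟨hh ▸ hu, hL ▸ hv⟩
  have hk := hsep _ hAB
  obtain ⟨D, hDsub, hDcard⟩ := Finset.exists_subset_card_eq hk
  let e := D.equivFinOfCardEq hDcard
  refine ⟨fun i => [(e.symm i).1], fun i => ?_, fun i j hij v hvi hvj => ?_⟩
  · have hmem := hDsub (e.symm i).2
    rw [Finset.mem_inter] at hmem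
    exact ⟨by simp [List.Chain'], by simp, ⟨_, hmem.1, rfl⟩, ⟨_, hmem.2, rfl⟩⟩
  · simp only [List.mem_singleton] at hvi hvj
    apply hij
    have : e.symm i = e.symm j := Subtype.ext (hvi ▸ hvj ▸ rfl)
    simpa using congrArg e this

theorem dmenger : ∀ (n : ℕ) (E : Finset (V × V)), E.card ≤ n →
    (∀ p ∈ E, p.1 ≠ p.2) →
    ∀ A B : Finset V, ∀ k : ℕ, (∀ S : Finset V, DSep E A B S → k ≤ S.card) →
    ∃ P : Fin k → List V,
      (∀ i, (P i).Chain' (ER E) ∧ (P i).Nodup ∧ Starts A (P i) ∧ Ends B (P i)) ∧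
      (∀ i j, i ≠ j → ∀ v, v ∈ P i → v ∉ P j) := by
  intro n
  induction n with
  | zero =>
    intro E hE _ A B k hsep
    have hEe : E = ∅ := Finset.card_eq_zero.mp (Nat.le_zero.mp hE)
    subst hEe
    exact dmenger_empty A B k hsep
  | succ n ih =>
    intro E hE hloop A B k hsep
    classical
    rcases E.eq_empty_or_nonempty with rfl | ⟨e, he⟩
    · exact dmenger_empty A B k hsep
    by_cases hc1 : ∀ S : Finset V, DSep (E.erase e) A B S → k ≤ S.card
    · obtain ⟨P, hP, hPd⟩ := ih (E.erase e)
        (by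
          have := Finset.card_erase_of_mem he
          omega)
        (fun p hp => hloop p (Finset.mem_of_mem_erase hp)) A B k hc1
      refine ⟨P, fun i => ?_, hPd⟩
      obtain ⟨h1, h2, h3, h4⟩ := hP i
      exact ⟨h1.imp (fun {u v} h => Finset.mem_of_mem_erase h), h2, h3, h4⟩
    · push_neg at hc1
      obtain ⟨Y, hYsep, hYcard⟩ := hc1
      have hxy : e.1 ≠ e.2 := hloop e he
      set x := e.1 with hxdef
      set y := e.2 with hydef
      set X₁ : Finset V := insert x Y with hX₁def
      set X₂ : Finset V := insert y Y with hX₂def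
      have hchain_erase : ∀ (z : V) (l : List V), (∀ v ∈ l, v ≠ z) → (z = x ∨ z = y) →
          l.Chain' (ER E) → l.Chain' (ER (E.erase e)) := by
        intro z l hnot hz hc
        refine (chain'_and_mem hc (fun v hv => hnot v hv)).imp ?_
        rintro u v ⟨huv, hu, hv⟩
        rw [ER, Finset.mem_erase]
        refine ⟨fun hEq => ?_, huv⟩
        rcases hz with rfl | rfl
        · exact hu (congrArg Prod.fst hEq)
        · exact hv (congrArg Prod.snd hEq)
      have hX₁sep : DSep E A B X₁ := by
        intro l hc hs hEnds
        by_cases hxl : x ∈ l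
        · exact ⟨x, Finset.mem_insert_self _ _, hxl⟩
        · obtain ⟨s, hsY, hsl⟩ := hYsep l
            (hchain_erase x l (fun v hv hvx => hxl (hvx ▸ hv)) (Or.inl rfl) hc) hs hEnds
          exact ⟨s, Finset.mem_insert_of_mem hsY, hsl⟩
      have hX₂sep : DSep E A B X₂ := by
        intro l hc hs hEnds
        by_cases hyl : y ∈ l
        · exact ⟨y, Finset.mem_insert_self _ _, hyl⟩
        · obtain ⟨s, hsY, hsl⟩ := hYsep l
            (hchain_erase y l (fun v hv hvy => hyl (hvy ▸ hv)) (Or.inr rfl) hc) hs hEnds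
          exact ⟨s, Finset.mem_insert_of_mem hsY, hsl⟩
      have hX₁card : X₁.card = k :=
        le_antisymm (le_trans (Finset.card_insert_le _ _) (by omega)) (hsep _ hX₁sep)
      have hX₂card : X₂.card = k :=
        le_antisymm (le_trans (Finset.card_insert_le _ _) (by omega)) (hsep _ hX₂sep)
      have hxY : x ∉ Y := by
        intro h
        have hcc : X₁.card = Y.card := by rw [hX₁def, Finset.insert_eq_self.mpr h]
        omega
      have hyY : y ∉ Y := by
        intro h
        have hcc : X₂.card = Y.card := by rw [hX₂def, Finset.insert_eq_self.mpr h]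
        omega
      have hyX₁ : y ∉ X₁ := by
        simp only [hX₁def, Finset.mem_insert]
        rintro (h | h)
        · exact hxy h.symm
        · exact hyY h
      have hxX₂ : x ∉ X₂ := by
        simp only [hX₂def, Finset.mem_insert]
        rintro (h | h)
        · exact hxy h
        · exact hxY h
      have hYsub₁ : Y ⊆ X₁ := Finset.subset_insert _ _
      have hYsub₂ : Y ⊆ X₂ := Finset.subset_insert _ _
      -- the A-side and B-side graphs
      set RA : V → Prop := fun v => ∃ l : List V, l.Chain' (ER E) ∧ Starts A l ∧
        l.getLast? = some v ∧ ∀ u ∈ l, u ∉ X₁ with hRAdef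
      set EA : Finset (V × V) := E.filter (fun p => RA p.1) with hEAdef
      have heEA : e ∉ EA := by
        rw [hEAdef, Finset.mem_filter]
        rintro ⟨-, l, hc, hs, hl, hav⟩
        exact hav x (List.mem_of_mem_getLast? hl) (Finset.mem_insert_self _ _)
      have hEAsub : EA ⊆ E.erase e := by
        intro p hp
        rw [Finset.mem_erase]
        exact ⟨fun hEq => heEA (hEq ▸ hp), Finset.filter_subset _ _ hp⟩
      have hcardE : (E.erase e).card ≤ n := by
        have := Finset.card_erase_of_mem he
        have : (E.erase e).card = E.card - 1 := this
        have hc1 : 1 ≤ E.card := Finset.card_pos.mpr ⟨e, he⟩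
        omega
      have hEAcard : EA.card ≤ n := le_trans (Finset.card_le_card hEAsub) hcardE
      have hsepA : ∀ Z : Finset V, DSep EA A X₁ Z → k ≤ Z.card := by
        intro Z hZ
        apply hsep
        intro l hc hs hEnds
        obtain ⟨w₀, hw₀X, hw₀l⟩ := hX₁sep l hc hs hEnds
        obtain ⟨l₁, w, hpre, hch, hhead, hne, hlast, hwX, hdrop⟩ :=
          exists_prefix_until X₁ l hc ⟨w₀, hw₀l, hw₀X⟩
        have hchEA : l₁.Chain' (ER EA) := by
          have hch' := hch
          rw [List.Chain', List.isChain_iff_getElem] at hch' ⊢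
          intro i hi
          refine Finset.mem_filter.mpr ⟨hch' i hi, ?_⟩
          have htne : l₁.take (i + 1) ≠ [] := by
            rw [ne_eq, List.take_eq_nil_iff]
            push_neg
            exact ⟨by omega, hne⟩
          have hlen : (l₁.take (i + 1)).length = i + 1 := by
            rw [List.length_take]
            omega
          refine ⟨l₁.take (i + 1), hch.prefix (List.take_prefix _ _), ?_, ?_, ?_⟩
          · obtain ⟨u, hu, hh⟩ := hs
            refine ⟨u, hu, ?_⟩
            rw [head?_of_prefix (List.take_prefix _ _) htne, hhead]
            exact hh
          · rw [List.getLast?_eq_getElem?, hlen]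
            simp only [Nat.add_sub_cancel]
            rw [List.getElem?_take, if_pos (by omega : i < i + 1),
              List.getElem?_eq_getElem (by omega)]
          · intro u hu
            rw [List.mem_iff_getElem] at hu
            obtain ⟨j, hj, rfl⟩ := hu
            rw [hlen] at hj
            have hj2 : j < l₁.length - 1 := by omega
            rw [List.getElem_take]
            have : l₁[j]'(by omega) = l₁.dropLast[j]'(by rw [List.length_dropLast]; omega) :=
              (List.getElem_dropLast ..).symm
            rw [this]
            exact hdrop _ (List.getElem_mem _)
        obtain ⟨s, hsZ, hsl₁⟩ := hZ l₁ hchEA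
          (by
            obtain ⟨u, hu, hh⟩ := hs
            exact ⟨u, hu, by rw [hhead]; exact hh⟩)
          ⟨w, hwX, hlast⟩
        exact ⟨s, hsZ, hpre.subset hsl₁⟩
      set RB : V → Prop := fun v => ∃ l : List V, l.Chain' (ER E) ∧ l.head? = some v ∧
        Ends B l ∧ ∀ u ∈ l, u ∉ X₂ with hRBdef
      set EB : Finset (V × V) := E.filter (fun p => RB p.2) with hEBdef
      have heEB : e ∉ EB := by
        rw [hEBdef, Finset.mem_filter]
        rintro ⟨-, l, hc, hh, hEnds, hav⟩
        exact hav y (List.mem_of_mem_head? hh) (Finset.mem_insert_self _ _)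
      have hEBsub : EB ⊆ E.erase e := by
        intro p hp
        rw [Finset.mem_erase]
        exact ⟨fun hEq => heEB (hEq ▸ hp), Finset.filter_subset _ _ hp⟩
      have hEBcard : EB.card ≤ n := le_trans (Finset.card_le_card hEBsub) hcardE
      have hsepB : ∀ Z : Finset V, DSep EB X₂ B Z → k ≤ Z.card := by
        intro Z hZ
        apply hsep
        intro l hc hs hEnds
        obtain ⟨w₀, hw₀X, hw₀l⟩ := hX₂sep l hc hs hEnds
        obtain ⟨l₂, w, hsuf, hch, hlast, hne, hhead, hwX, htl⟩ :=
          exists_suffix_from X₂ hc ⟨w₀, hw₀l, hw₀X⟩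
        have hchEB : l₂.Chain' (ER EB) := by
          have hch' := hch
          rw [List.Chain', List.isChain_iff_getElem] at hch' ⊢
          intro i hi
          refine Finset.mem_filter.mpr ⟨hch' i hi, ?_⟩
          have hdne : l₂.drop (i + 1) ≠ [] := by
            intro hcon
            have := congrArg List.length hcon
            rw [List.length_drop] at this
            simp at this
            omega
          refine ⟨l₂.drop (i + 1), Chain'.of_suffix hch (List.drop_suffix _ _), ?_, ?_, ?_⟩
          · rw [List.head?_drop, List.getElem?_eq_getElem (by omega)]
          · obtain ⟨v, hv, hL⟩ := hEnds
            refine ⟨v, hv, ?_⟩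
            rw [getLast?_of_suffix (List.drop_suffix _ _) hdne, hlast]
            exact hL
          · intro u hu
            apply htl
            have : l₂.drop (i + 1) = l₂.tail.drop i := by
              rw [← List.drop_one, List.drop_drop, Nat.add_comm]
            rw [this] at hu
            exact List.drop_subset _ _ hu
        obtain ⟨s, hsZ, hsl₂⟩ := hZ l₂ hchEB ⟨w, hwX, hhead⟩
          (by
            obtain ⟨v, hv, hL⟩ := hEnds
            exact ⟨v, hv, by rw [hlast]; exact hL⟩)
        exact ⟨s, hsZ, hsuf.subset hsl₂⟩
      obtain ⟨Q, hQ, hQd⟩ := ih EA hEAcard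
        (fun p hp => hloop p (Finset.filter_subset _ _ hp)) A X₁ k hsepA
      obtain ⟨R, hR, hRd⟩ := ih EB hEBcard
        (fun p hp => hloop p (Finset.filter_subset _ _ hp)) X₂ B k hsepB
      have hQne : ∀ i, Q i ≠ [] := fun i => starts_ne_nil (hQ i).2.2.1
      have hRne : ∀ i, R i ≠ [] := fun i => starts_ne_nil (hR i).2.2.1
      set ql : Fin k → V := fun i => (Q i).getLast (hQne i) with hqldef
      set rh : Fin k → V := fun i => (R i).head (hRne i) with hrhdef
      have hqlast? : ∀ i, (Q i).getLast? = some (ql i) :=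
        fun i => List.getLast?_eq_getLast _
      have hrhead? : ∀ i, (R i).head? = some (rh i) :=
        fun i => List.head?_eq_head _
      have hqlX : ∀ i, ql i ∈ X₁ := by
        intro i
        obtain ⟨v, hv, hL⟩ := (hQ i).2.2.2
        rw [hqlast? i] at hL
        exact (Option.some_injective _ hL) ▸ hv
      have hrhX : ∀ j, rh j ∈ X₂ := by
        intro j
        obtain ⟨v, hv, hL⟩ := (hR j).2.2.1
        rw [hrhead? j] at hL
        exact (Option.some_injective _ hL) ▸ hv
      have hql_mem : ∀ i, ql i ∈ Q i := fun i => List.getLast_mem _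
      have hrh_mem : ∀ j, rh j ∈ R j := fun j => List.head_mem _
      have hqinj : ∀ i j, ql i = ql j → i = j := by
        intro i j h
        by_contra hne
        exact hQd i j hne _ (hql_mem i) (h ▸ hql_mem j)
      have hrinj : ∀ i j, rh i = rh j → i = j := by
        intro i j h
        by_contra hne
        exact hRd i j hne _ (hrh_mem i) (h ▸ hrh_mem j)
      have hFQbij : Function.Bijective (fun i => (⟨ql i, hqlX i⟩ : {v // v ∈ X₁})) :=
        (Fintype.bijective_iff_injective_and_card _).mpr
          ⟨fun i j hij => hqinj i j (congrArg Subtype.val hij),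
            by rw [Fintype.card_coe, hX₁card, Fintype.card_fin]⟩
      have hFRbij : Function.Bijective (fun j => (⟨rh j, hrhX j⟩ : {v // v ∈ X₂})) :=
        (Fintype.bijective_iff_injective_and_card _).mpr
          ⟨fun i j hij => hrinj i j (congrArg Subtype.val hij),
            by rw [Fintype.card_coe, hX₂card, Fintype.card_fin]⟩
      have hQonly : ∀ i, ∀ v ∈ Q i, v ∈ X₁ → v = ql i := by
        intro i v hv hvX
        obtain ⟨j, hj⟩ := hFQbij.2 ⟨v, hvX⟩
        have hjv : ql j = v := congrArg Subtype.val hj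
        by_cases hij : j = i
        · rw [← hjv, hij]
        · exact absurd (hjv.symm ▸ hv : ql j ∈ Q i) (hQd j i hij _ (hql_mem j))
      have hRonly : ∀ j, ∀ v ∈ R j, v ∈ X₂ → v = rh j := by
        intro j v hv hvX
        obtain ⟨i, hi⟩ := hFRbij.2 ⟨v, hvX⟩
        have hiv : rh i = v := congrArg Subtype.val hi
        by_cases hij : i = j
        · rw [← hiv, hij]
        · exact absurd (hiv.symm ▸ hv : rh i ∈ R j) (hRd i j hij _ (hrh_mem i))
      set gm : V → V := fun s => if s = x then y else s with hgmdef
      have hgmX₂ : ∀ s ∈ X₁, gm s ∈ X₂ := by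
        intro s hs
        rw [hgmdef]
        by_cases h : s = x
        · simp only [h, if_pos rfl]
          exact Finset.mem_insert_self _ _
        · simp only [if_neg h]
          rcases Finset.mem_insert.mp hs with rfl | hsY
          · exact absurd rfl h
          · exact Finset.mem_insert_of_mem hsY
      set π : Fin k → Fin k :=
        fun i => (Equiv.ofBijective _ hFRbij).symm ⟨gm (ql i), hgmX₂ _ (hqlX i)⟩ with hπdef
      have hπ : ∀ i, rh (π i) = gm (ql i) := by
        intro i
        have := (Equiv.ofBijective _ hFRbij).apply_symm_apply ⟨gm (ql i), hgmX₂ _ (hqlX i)⟩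
        exact congrArg Subtype.val this
      have hgm_inj : ∀ i j, gm (ql i) = gm (ql j) → ql i = ql j := by
        intro i j h2
        by_cases h3 : ql i = x <;> by_cases h4 : ql j = x
        · rw [h3, h4]
        · exfalso
          simp only [hgmdef] at h2
          rw [if_pos h3, if_neg h4] at h2
          exact hyX₁ (by rw [h2]; exact hqlX j)
        · exfalso
          simp only [hgmdef] at h2
          rw [if_neg h3, if_pos h4] at h2
          exact hyX₁ (h2 ▸ hqlX i)
        · simp only [hgmdef] at h2
          rwa [if_neg h3, if_neg h4] at h2
      have hπinj : ∀ i j, π i = π j → i = j := by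
        intro i j h
        have h2 : gm (ql i) = gm (ql j) := by rw [← hπ i, ← hπ j, h]
        exact hqinj i j (hgm_inj i j h2)
      have hQchainE' : ∀ i, (Q i).Chain' (ER (E.erase e)) :=
        fun i => (hQ i).1.imp (fun {_ _} h => hEAsub h)
      have hRchainE' : ∀ j, (R j).Chain' (ER (E.erase e)) :=
        fun j => (hR j).1.imp (fun {_ _} h => hEBsub h)
      have hcross : ∀ i j, ∀ v ∈ Q i, v ∈ R j → v = ql i ∧ v = rh j := by
        intro i j v hvQ hvR
        by_contra hcon
        rw [not_and_or] at hcon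
        have hQd2 : (Q i).Nodup := (hQ i).2.1
        have hRd2 : (R j).Nodup := (hR j).2.1
        set T : List V := (Q i).takeWhile (fun z => z ≠ v) with hTdef
        set DQ : List V := (Q i).dropWhile (fun z => z ≠ v) with hDQdef
        have hTD : T ++ DQ = Q i := List.takeWhile_append_dropWhile
        have hDQh : DQ.head? = some v := head?_dropWhile_ne hvQ
        have hDQne : DQ ≠ [] := by intro h; rw [h] at hDQh; simp at hDQh
        set QA : List V := T ++ [v] with hQAdef
        have hQApre : QA <+: Q i := by
          rw [← hTD, hQAdef]
          have hc : DQ = v :: DQ.tail := List.eq_cons_of_mem_head? hDQh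
          rw [hc]
          exact ⟨DQ.tail, by simp⟩
        have hQAne : QA ≠ [] := by simp [hQAdef]
        have hQAchain : QA.Chain' (ER (E.erase e)) := (hQchainE' i).prefix hQApre
        have hQAhead : QA.head? = (Q i).head? := head?_of_prefix hQApre hQAne
        have hQAlast : QA.getLast? = some v := List.getLast?_concat
        have hQAmem : ∀ u ∈ QA, u ∈ T ∨ u = v := by
          intro u hu
          rw [hQAdef] at hu
          rcases List.mem_append.mp hu with h | h
          · exact Or.inl h
          · exact Or.inr (List.mem_singleton.mp h)
        have hTmem : ∀ u ∈ T, u ∈ Q i ∧ u ≠ v := by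
          intro u hu
          refine ⟨by rw [← hTD]; exact List.mem_append.mpr (Or.inl hu), ?_⟩
          have := List.mem_takeWhile_imp hu
          simpa using this
        have hqlT : ql i ∉ T := by
          intro hmem
          have h1 : ql i ∈ DQ := by
            have hsuffix : DQ <:+ Q i := by rw [← hTD]; exact ⟨T, rfl⟩
            have hlq : DQ.getLast? = (Q i).getLast? := getLast?_of_suffix hsuffix hDQne
            rw [hqlast? i] at hlq
            exact List.mem_of_mem_getLast? hlq
          have hdisj := List.disjoint_of_nodup_append (by rw [hTD]; exact hQd2)
          exact hdisj hmem h1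
        set RBl : List V := (R j).dropWhile (fun z => z ≠ v) with hRBdef
        have hRBh : RBl.head? = some v := head?_dropWhile_ne hvR
        have hRBne : RBl ≠ [] := by intro h; rw [h] at hRBh; simp at hRBh
        have hRBsuf : RBl <:+ R j := List.dropWhile_suffix _
        have hRBchain : RBl.Chain' (ER (E.erase e)) := Chain'.of_suffix (hRchainE' j) hRBsuf
        have hRBlast : RBl.getLast? = (R j).getLast? := getLast?_of_suffix hRBsuf hRBne
        have hRBtailsub : ∀ u ∈ RBl.tail, u ∈ R j :=
          fun u hu => hRBsuf.subset (List.mem_of_mem_tail hu)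
        have hRconsdec : R j = rh j :: (R j).tail := List.eq_cons_of_mem_head? (hrhead? j)
        have hrhtail : rh j ∉ (R j).tail := by
          have hnodup := hRd2
          rw [hRconsdec] at hnodup
          exact (List.nodup_cons.mp hnodup).1
        have hrhRB : v ≠ rh j → rh j ∉ RBl := by
          intro hvr hmem
          have hstep : RBl = (R j).tail.dropWhile (fun z => z ≠ v) := by
            rw [hRBdef]
            conv_lhs => rw [hRconsdec]
            rw [List.dropWhile_cons]
            simp
            exact fun h => absurd h.symm hvr
          rw [hstep] at hmem
          exact hrhtail ((List.dropWhile_suffix _).subset hmem)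
        set W : List V := QA ++ RBl.tail with hWdef
        have hWchain : W.Chain' (ER (E.erase e)) :=
          chain'_glue hQAchain hRBchain (by rw [hQAlast, hRBh])
        have hWstart : Starts A W := by
          obtain ⟨u, hu, hh⟩ := (hQ i).2.2.1
          refine ⟨u, hu, ?_⟩
          rw [← head?_of_prefix (⟨RBl.tail, rfl⟩ : QA <+: W) hQAne, hQAhead]
          exact hh
        have hWends : Ends B W := by
          obtain ⟨w', hw', hL⟩ := (hR j).2.2.2
          refine ⟨w', hw', ?_⟩
          rw [hWdef, glue_getLast? hQAne (by rw [hQAlast, hRBh]) hRBne, hRBlast]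
          exact hL
        have hWavoid : ∀ u ∈ W, u ∉ Y := by
          intro u hu huY
          rcases List.mem_append.mp hu with huQA | huRB
          · rcases hQAmem u huQA with huT | rfl
            · obtain ⟨huQ, huv⟩ := hTmem u huT
              have hql : u = ql i := hQonly i u huQ (hYsub₁ huY)
              exact hqlT (hql ▸ huT)
            · have h1 : u = ql i := hQonly i u hvQ (hYsub₁ huY)
              have h2 : u = rh j := hRonly j u hvR (hYsub₂ huY)
              rcases hcon with hc | hc
              · exact hc h1
              · exact hc h2
          · have huR : u ∈ R j := hRBtailsub u huRB
            have h2 : u = rh j := hRonly j u huR (hYsub₂ huY)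
            by_cases hvr : v = rh j
            · have hRBeq : RBl = R j := by
                rw [hRBdef]
                conv_lhs => rw [hRconsdec]
                rw [List.dropWhile_cons]
                simp [hvr]
                exact hRconsdec.symm
              rw [hRBeq] at huRB
              exact hrhtail (h2 ▸ huRB)
            · exact hrhRB hvr (h2 ▸ List.mem_of_mem_tail huRB)
        obtain ⟨s, hsY, hsW⟩ := hYsep W hWchain hWstart hWends
        exact hWavoid s hsW hsY
      -- final path system
      set Rp : Fin k → List V := fun i => if ql i = x then R (π i) else (R (π i)).tail
        with hRpdef
      have hRpsub : ∀ i, ∀ v ∈ Rp i, v ∈ R (π i) := by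
        intro i v hv
        simp only [hRpdef] at hv
        by_cases h : ql i = x
        · rw [if_pos h] at hv; exact hv
        · rw [if_neg h] at hv; exact List.mem_of_mem_tail hv
      have hRheadeq : ∀ i, (R (π i)).head? = some (gm (ql i)) := by
        intro i; rw [hrhead? (π i), hπ i]
      have hjunction : ∀ i, ql i ≠ x → (Q i).getLast? = (R (π i)).head? := by
        intro i h
        rw [hqlast? i, hRheadeq i, hgmdef]
        simp [h]
      have hPchain : ∀ i, (Q i ++ Rp i).Chain' (ER E) := by
        intro i
        have hQc : (Q i).Chain' (ER E) :=
          (hQ i).1.imp (fun {_ _} h => Finset.filter_subset _ _ h)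
        have hRc : (R (π i)).Chain' (ER E) :=
          (hR (π i)).1.imp (fun {_ _} h => Finset.filter_subset _ _ h)
        simp only [hRpdef]
        by_cases h : ql i = x
        · rw [if_pos h, List.Chain', List.isChain_append]
          refine ⟨hQc, hRc, ?_⟩
          intro a ha b hb
          rw [hqlast? i] at ha
          rw [hRheadeq i] at hb
          have ha' : a = x := by rw [← h]; exact (Option.mem_some_iff.mp ha).symm
          have hb' : b = y := by
            have := (Option.mem_some_iff.mp hb).symm
            rw [this, hgmdef]
            simp [h]
          rw [ha', hb']
          show (x, y) ∈ E
          simpa using he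
        · rw [if_neg h]
          exact chain'_glue hQc hRc (hjunction i h)
      have hPnodup : ∀ i, (Q i ++ Rp i).Nodup := by
        intro i
        have hQd2 := (hQ i).2.1
        have hRd2 := (hR (π i)).2.1
        refine List.Nodup.append hQd2 ?_ ?_
        · simp only [hRpdef]
          by_cases h : ql i = x
          · rw [if_pos h]; exact hRd2
          · rw [if_neg h]; exact hRd2.sublist (List.tail_sublist _)
        · intro v hvQ hvR
          have hvR' : v ∈ R (π i) := hRpsub i v hvR
          obtain ⟨h1, h2⟩ := hcross i (π i) v hvQ hvR'
          by_cases h : ql i = x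
          · have hvy : v = y := by rw [h2, hπ i, hgmdef]; simp [h]
            exact hxy (by rw [← h, ← h1, hvy])
          · have hveq : v = rh (π i) := h2
            have hcons := List.eq_cons_of_mem_head? (hrhead? (π i))
            have hnodup := hRd2
            rw [hcons] at hnodup
            have hvt : v ∈ (R (π i)).tail := by
              simp only [hRpdef] at hvR
              rw [if_neg h] at hvR
              exact hvR
            exact (List.nodup_cons.mp hnodup).1 (hveq ▸ hvt)
      have hPstart : ∀ i, Starts A (Q i ++ Rp i) := by
        intro i
        obtain ⟨u, hu, hh⟩ := (hQ i).2.2.1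
        refine ⟨u, hu, ?_⟩
        rw [← head?_of_prefix (⟨Rp i, rfl⟩ : Q i <+: Q i ++ Rp i) (hQne i)]
        exact hh
      have hPend : ∀ i, Ends B (Q i ++ Rp i) := by
        intro i
        obtain ⟨v, hv, hL⟩ := (hR (π i)).2.2.2
        refine ⟨v, hv, ?_⟩
        simp only [hRpdef]
        by_cases h : ql i = x
        · rw [if_pos h, List.getLast?_append_of_ne_nil _ (hRne (π i))]
          exact hL
        · rw [if_neg h, glue_getLast? (hQne i) (hjunction i h) (hRne (π i))]
          exact hL
      refine ⟨fun i => Q i ++ Rp i, fun i => ⟨hPchain i, hPnodup i, hPstart i, hPend i⟩, ?_⟩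
      intro i j hij v hvi hvj
      have hmixed : ∀ i' j', i' ≠ j' → v ∈ Q i' → v ∈ Rp j' → False := by
        intro i' j' hij' hQi hRpj
        obtain ⟨h1, h2⟩ := hcross i' (π j') v hQi (hRpsub j' v hRpj)
        by_cases h : ql j' = x
        · have hvy : v = y := by rw [h2, hπ j', hgmdef]; simp [h]
          apply hyX₁
          rw [← hvy, h1]
          exact hqlX i'
        · have hvq : v = ql j' := by rw [h2, hπ j', hgmdef]; simp [h]
          exact hij' (hqinj i' j' (by rw [← h1, hvq]))
      rcases List.mem_append.mp hvi with hQi | hRpi <;>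
        rcases List.mem_append.mp hvj with hQj | hRpj
      · exact hQd i j hij v hQi hQj
      · exact hmixed i j hij hQi hRpj
      · exact hmixed j i (Ne.symm hij) hQj hRpi
      · exact hRd (π i) (π j) (fun hpi => hij (hπinj _ _ hpi)) v (hRpsub i v hRpi)
          (hRpsub j v hRpj)

end DMenger

section GraphConversion

variable {V : Type}

lemma exists_nodup_chain' {r : V → V → Prop} [DecidableEq V] :
    ∀ (n : ℕ) (l : List V), l.length ≤ n → l.Chain' r →
    ∃ l' : List V, l'.Chain' r ∧ l'.Nodup ∧ l'.head? = l.head? ∧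
      l'.getLast? = l.getLast? ∧ ∀ z ∈ l', z ∈ l := by
  intro n
  induction n with
  | zero =>
    intro l hl _
    have : l = [] := List.eq_nil_of_length_eq_zero (Nat.le_zero.mp hl)
    subst this
    exact ⟨[], by simp [List.Chain']⟩
  | succ n ih =>
    intro l hl hc
    cases l with
    | nil => exact ⟨[], by simp [List.Chain']⟩
    | cons u rest =>
      by_cases hu : u ∈ rest
      · set l₂ : List V := rest.dropWhile (fun z => z ≠ u) with hl₂def
        have hl₂h : l₂.head? = some u := head?_dropWhile_ne hu
        have hl₂ne : l₂ ≠ [] := by intro h; rw [h] at hl₂h; simp at hl₂h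
        have hl₂suf : l₂ <:+ rest := List.dropWhile_suffix _
        have hl₂len : l₂.length ≤ n := by
          have h1 := hl₂suf.length_le
          simp at hl
          omega
        obtain ⟨l', h1, h2, h3, h4, h5⟩ := ih l₂ hl₂len (Chain'.of_suffix hc.tail hl₂suf)
        refine ⟨l', h1, h2, by rw [h3, hl₂h]; rfl, ?_, ?_⟩
        · rw [h4, getLast?_of_suffix hl₂suf hl₂ne]
          have : rest ≠ [] := by intro h; rw [h] at hu; simp at hu
          rw [show u :: rest = [u] ++ rest from rfl, List.getLast?_append_of_ne_nil _ this]
        · intro z hz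
          exact List.mem_cons_of_mem _ (hl₂suf.subset (h5 z hz))
      · by_cases hrn : rest = []
        · subst hrn
          exact ⟨[u], by simp [List.Chain'], by simp, by simp, by simp, by simp⟩
        · obtain ⟨l', h1, h2, h3, h4, h5⟩ := ih rest (by simp at hl; omega) hc.tail
          have hl'ne : l' ≠ [] := by
            intro h
            rw [h] at h3
            cases rest with
            | nil => exact hrn rfl
            | cons w r' => simp at h3
          refine ⟨u :: l', ?_, ?_, by simp, ?_, ?_⟩
          · rw [List.Chain', List.isChain_cons]
            exact ⟨fun z hz => chain'_pair hc rfl (by simp only [List.tail_cons]; rw [← h3]; exact hz), h1⟩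
          · rw [List.nodup_cons]
            exact ⟨fun hmem => hu (h5 u hmem), h2⟩
          · rw [show u :: l' = [u] ++ l' from rfl, List.getLast?_append_of_ne_nil _ hl'ne, h4,
              show u :: rest = [u] ++ rest from rfl, List.getLast?_append_of_ne_nil _ hrn]
          · intro z hz
            rcases List.mem_cons.mp hz with rfl | hz'
            · exact List.mem_cons_self
            · exact List.mem_cons_of_mem _ (h5 z hz')

lemma exists_walk_of_chain' {G : SimpleGraph V} :
    ∀ (l : List V) (u v : V), l.Chain' G.Adj → l.head? = some u → l.getLast? = some v →
    ∃ p : G.Walk u v, p.support = l := by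
  intro l
  induction l with
  | nil => intro u v _ h; simp at h
  | cons a t ih =>
    intro u v hc hh hL
    have hau : a = u := by simpa using hh
    subst hau
    cases t with
    | nil =>
      have : a = v := by simpa using hL
      subst this
      exact ⟨SimpleGraph.Walk.nil, by simp⟩
    | cons b t' =>
      have hadj : G.Adj a b := (List.isChain_cons_cons.mp hc).1
      obtain ⟨p, hps⟩ := ih b v (List.isChain_cons_cons.mp hc).2 rfl
        (by rwa [List.getLast?_cons_cons] at hL)
      exact ⟨SimpleGraph.Walk.cons hadj p, by simp [hps]⟩

lemma walk_list_of_induce_reachable {G : SimpleGraph V} {s : Set V}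
    {u v : V} {hu : u ∈ s} {hv : v ∈ s} (h : (G.induce s).Reachable ⟨u, hu⟩ ⟨v, hv⟩) :
    ∃ l : List V, l.Chain' G.Adj ∧ l.head? = some u ∧ l.getLast? = some v ∧
      ∀ z ∈ l, z ∈ s := by
  obtain ⟨p⟩ := h
  refine ⟨p.support.map Subtype.val, ?_, ?_, ?_, ?_⟩
  · rw [List.Chain', List.isChain_map]
    exact p.isChain_adj_support.imp (fun {c d} hadj => hadj)
  · rw [p.support_eq_cons, List.map_cons, List.head?_cons]
  · have h1 : p.support.getLast? = some ⟨v, hv⟩ := by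
      rw [← List.head?_reverse, ← SimpleGraph.Walk.support_reverse, p.reverse.support_eq_cons]
      simp
    rw [List.getLast?_map, h1]
    rfl
  · intro z hz
    rw [List.mem_map] at hz
    obtain ⟨⟨z', hz'⟩, _, rfl⟩ := hz
    exact hz'

end GraphConversion

/-- In a `t`-connected graph, any two distinct vertices `a, b` are joined by
`t-1` paths, each of length at least two, that are pairwise internally
vertex-disjoint. -/
theorem internally_disjoint_paths_of_length_ge_two (t : ℕ) (ht : 1 ≤ t)
    (V : Type) [Fintype V] (G : SimpleGraph V) (hG : IsKConnected G t)
    (a b : V) (hab : a ≠ b) :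
    ∃ P : Fin (t - 1) → G.Walk a b,
      (∀ i, (P i).IsPath ∧ 2 ≤ (P i).length) ∧
      ∀ i j, i ≠ j → ∀ v, v ∈ (P i).support → v ∈ (P j).support → v = a ∨ v = b := by
  classical
  obtain ⟨hcard, hconn⟩ := hG
  rw [Nat.card_eq_fintype_card] at hcard
  set A : Finset V := (G.neighborFinset a).erase b with hAdef
  set B : Finset V := (G.neighborFinset b).erase a with hBdef
  set E2 : Finset (V × V) := Finset.univ.filter
    (fun p => G.Adj p.1 p.2 ∧ p.1 ≠ a ∧ p.1 ≠ b ∧ p.2 ≠ a ∧ p.2 ≠ b) with hE2def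
  have hE2mem : ∀ p : V × V,
      p ∈ E2 ↔ (G.Adj p.1 p.2 ∧ p.1 ≠ a ∧ p.1 ≠ b ∧ p.2 ≠ a ∧ p.2 ≠ b) := by
    intro p
    rw [hE2def, Finset.mem_filter]
    simp
  have hloop : ∀ p ∈ E2, p.1 ≠ p.2 := fun p hp => ((hE2mem p).mp hp).1.ne
  have hAmem : ∀ u, u ∈ A ↔ (G.Adj a u ∧ u ≠ b) := by
    intro u
    rw [hAdef, Finset.mem_erase, SimpleGraph.mem_neighborFinset]
    tauto
  have hBmem : ∀ u, u ∈ B ↔ (G.Adj b u ∧ u ≠ a) := by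
    intro u
    rw [hBdef, Finset.mem_erase, SimpleGraph.mem_neighborFinset]
    tauto
  have hvert : ∀ (l : List V), l.Chain' (ER E2) → Starts A l →
      ∀ v ∈ l, v ≠ a ∧ v ≠ b := by
    intro l hc hs v hv
    rw [List.mem_iff_getElem] at hv
    obtain ⟨i, hi, rfl⟩ := hv
    cases i with
    | zero =>
      obtain ⟨u, hu, hh⟩ := hs
      cases l with
      | nil => simp at hi
      | cons c tl =>
        have hcu : c = u := by simpa using hh
        have hA := (hAmem u).mp hu
        simp only [List.getElem_cons_zero]
        rw [hcu]
        exact ⟨hA.1.ne', hA.2⟩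
    | succ m =>
      have hp := List.isChain_iff_getElem.mp hc m (by omega)
      have hmemE := (hE2mem _).mp hp
      simp only [List.get_eq_getElem] at hmemE
      exact ⟨hmemE.2.2.2.1, hmemE.2.2.2.2⟩
  have hsepmain : ∀ S : Finset V, DSep E2 A B S → t - 1 ≤ S.card := by
    intro S hS
    by_contra hlt
    push_neg at hlt
    set S' : Finset V := (S.erase a).erase b with hS'def
    have hS'sub : S' ⊆ S := (Finset.erase_subset _ _).trans (Finset.erase_subset _ _)
    have haS' : a ∉ S' := by simp [hS'def]
    have hbS' : b ∉ S' := by simp [hS'def]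
    have hS'card : S'.card ≤ S.card := Finset.card_le_card hS'sub
    obtain ⟨w, hwS', hwa, hwb⟩ : ∃ w, w ∉ S' ∧ w ≠ a ∧ w ≠ b := by
      have h2 := Finset.card_insert_le a (insert b S')
      have h3 := Finset.card_insert_le b S'
      by_contra hcon
      push_neg at hcon
      have hsub : Finset.univ ⊆ insert a (insert b S') := by
        intro z _
        by_cases hz1 : z ∈ S'
        · exact Finset.mem_insert_of_mem (Finset.mem_insert_of_mem hz1)
        · by_cases hz2 : z = a
          · simp [hz2]
          · have := hcon z hz1 hz2
            simp [this]
      have := Finset.card_le_card hsub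
      rw [Finset.card_univ] at this
      omega
    have hw1 : ∃ l : List V, l.Chain' G.Adj ∧ l.head? = some w ∧ l.getLast? = some b ∧
        ∀ z ∈ l, z ∉ insert a S' := by
      have hs1 : (↑(insert a S') : Set V).ncard < t := by
        rw [Set.ncard_coe_finset]
        have := Finset.card_insert_le a S'
        omega
      have hrc := (hconn _ hs1).preconnected
      have hwmem : w ∈ (↑(insert a S') : Set V)ᶜ := by simp [hwa, hwS']
      have hbmem : b ∈ (↑(insert a S') : Set V)ᶜ := by simp [Ne.symm hab, hbS']
      obtain ⟨l, h1, h2, h3, h4⟩ := walk_list_of_induce_reachable (hrc ⟨w, hwmem⟩ ⟨b, hbmem⟩)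
      exact ⟨l, h1, h2, h3, fun z hz => by have := h4 z hz; simpa using this⟩
    have hw2 : ∃ l : List V, l.Chain' G.Adj ∧ l.head? = some w ∧ l.getLast? = some a ∧
        ∀ z ∈ l, z ∉ insert b S' := by
      have hs1 : (↑(insert b S') : Set V).ncard < t := by
        rw [Set.ncard_coe_finset]
        have := Finset.card_insert_le b S'
        omega
      have hrc := (hconn _ hs1).preconnected
      have hwmem : w ∈ (↑(insert b S') : Set V)ᶜ := by simp [hwb, hwS']
      have hamem : a ∈ (↑(insert b S') : Set V)ᶜ := by simp [hab, haS']
      obtain ⟨l, h1, h2, h3, h4⟩ := walk_list_of_induce_reachable (hrc ⟨w, hwmem⟩ ⟨a, hamem⟩)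
      exact ⟨l, h1, h2, h3, fun z hz => by have := h4 z hz; simpa using this⟩
    obtain ⟨l₁, hc₁, hh₁, hL₁, hv₁⟩ := hw1
    obtain ⟨l₂, hc₂, hh₂, hL₂, hv₂⟩ := hw2
    have hl₁ne : l₁ ≠ [] := by intro h; rw [h] at hh₁; simp at hh₁
    have hl₂ne : l₂ ≠ [] := by intro h; rw [h] at hh₂; simp at hh₂
    set rOK : V → V → Prop :=
      fun u z => G.Adj u z ∧ ¬(u = a ∧ z = b) ∧ ¬(u = b ∧ z = a) with hrOKdef
    have hL2r : l₂.reverse.Chain' rOK := by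
      rw [List.Chain', List.isChain_reverse]
      have hmem : ∀ z ∈ l₂, z ≠ b := by
        intro z hz
        have := hv₂ z hz
        simp at this
        tauto
      refine (chain'_and_mem hc₂ hmem).imp ?_
      rintro u z ⟨hadj, hu, hz⟩
      exact ⟨hadj.symm, fun hc => hu hc.2, fun hc => hz hc.1⟩
    have hL1r : l₁.Chain' rOK := by
      have hmem : ∀ z ∈ l₁, z ≠ a := by
        intro z hz
        have := hv₁ z hz
        simp at this
        tauto
      refine (chain'_and_mem hc₁ hmem).imp ?_
      rintro u z ⟨hadj, hu, hz⟩
      exact ⟨hadj, fun hc => hu hc.1, fun hc => hz hc.2⟩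
    set L : List V := l₂.reverse ++ l₁.tail with hLdef
    have hl₂rne : l₂.reverse ≠ [] := by simpa using hl₂ne
    have hjunc : l₂.reverse.getLast? = l₁.head? := by
      rw [List.getLast?_reverse, hh₂, hh₁]
    have hLchain : L.Chain' rOK := chain'_glue hL2r hL1r hjunc
    have hLhead : L.head? = some a := by
      rw [← head?_of_prefix (⟨l₁.tail, rfl⟩ : l₂.reverse <+: L) hl₂rne,
        List.head?_reverse, hL₂]
    have hLlast : L.getLast? = some b := by
      rw [hLdef, glue_getLast? hl₂rne hjunc hl₁ne]
      exact hL₁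
    have hLS' : ∀ z ∈ L, z ∉ S' := by
      intro z hz
      rcases List.mem_append.mp hz with h | h
      · have := hv₂ z (List.mem_reverse.mp h)
        simp at this
        tauto
      · have := hv₁ z (List.mem_of_mem_tail h)
        simp at this
        tauto
    obtain ⟨l', hlc, hlnd, hlh, hll, hlsub⟩ :=
      exists_nodup_chain' L.length L le_rfl hLchain
    rw [hLhead] at hlh
    rw [hLlast] at hll
    have hl'cons : l' = a :: l'.tail := List.eq_cons_of_mem_head? hlh
    have htlne : l'.tail ≠ [] := by
      intro h
      rw [hl'cons, h] at hll
      simp at hll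
      exact hab hll
    have htll : l'.tail.getLast? = some b := by
      rw [hl'cons] at hll
      rwa [show a :: l'.tail = [a] ++ l'.tail from rfl,
        List.getLast?_append_of_ne_nil _ htlne] at hll
    set M : List V := l'.tail.dropLast with hMdef
    have htlM : l'.tail = M ++ [b] := by
      have hd := List.dropLast_append_getLast htlne
      rw [List.getLast?_eq_getLast htlne] at htll
      have hb : l'.tail.getLast htlne = b := Option.some_injective _ htll
      rw [← hb]
      exact hd.symm
    have hl'decomp : l' = a :: (M ++ [b]) := by rw [hl'cons, htlM]
    have hnd2 : (a :: (M ++ [b])).Nodup := hl'decomp ▸ hlnd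
    have haM : a ∉ M := fun h => (List.nodup_cons.mp hnd2).1 (List.mem_append.mpr (Or.inl h))
    have hbM : b ∉ M := by
      have hnd3 := (List.nodup_cons.mp hnd2).2
      have hdisj := List.disjoint_of_nodup_append hnd3
      exact fun h => hdisj h (by simp)
    have hMne : M ≠ [] := by
      intro h
      rw [h] at hl'decomp
      simp at hl'decomp
      have hcc := hlc
      rw [hl'decomp] at hcc
      exact (List.isChain_cons_cons.mp hcc).1.2.1 ⟨rfl, rfl⟩
    have hMBchain : (M ++ [b]).Chain' rOK := by
      have h0 := hlc
      rw [hl'decomp] at h0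
      exact h0.tail
    have hMchainOK : M.Chain' rOK := hMBchain.prefix ⟨[b], rfl⟩
    have hMmem : ∀ z ∈ M, z ≠ a ∧ z ≠ b :=
      fun z hz => ⟨fun h => haM (h ▸ hz), fun h => hbM (h ▸ hz)⟩
    have hMS' : ∀ z ∈ M, z ∉ S' := by
      intro z hz
      apply hLS'
      apply hlsub
      rw [hl'decomp]
      exact List.mem_cons_of_mem _ (List.mem_append.mpr (Or.inl hz))
    have hMchain : M.Chain' (ER E2) := by
      refine (chain'_and_mem hMchainOK (fun z hz => hMmem z hz)).imp ?_
      rintro u z ⟨⟨hadj, _, _⟩, hu, hz⟩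
      exact (hE2mem (u, z)).mpr ⟨hadj, hu.1, hu.2, hz.1, hz.2⟩
    have hMstart : Starts A M := by
      have hMh : M.head? = some (M.head hMne) := List.head?_eq_head _
      have hv' : l'.tail.head? = some (M.head hMne) := by
        rw [htlM, ← head?_of_prefix (⟨[b], rfl⟩ : M <+: M ++ [b]) hMne, hMh]
      have hpair : rOK a (M.head hMne) := chain'_pair hlc hlh hv'
      exact ⟨M.head hMne, (hAmem _).mpr ⟨hpair.1, fun h => hpair.2.1 ⟨rfl, h⟩⟩, hMh⟩
    have hMends : Ends B M := by
      have hpair : rOK (M.getLast hMne) b :=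
        (List.isChain_append.mp hMBchain).2.2 _ (List.getLast?_eq_getLast _) b rfl
      exact ⟨M.getLast hMne,
        (hBmem _).mpr ⟨hpair.1.symm, (hMmem _ (List.getLast_mem _)).1⟩,
        List.getLast?_eq_getLast _⟩
    obtain ⟨s, hsS, hsM⟩ := hS M hMchain hMstart hMends
    have h1 := hMmem s hsM
    apply hMS' s hsM
    rw [hS'def]
    exact Finset.mem_erase.mpr ⟨h1.2, Finset.mem_erase.mpr ⟨h1.1, hsS⟩⟩
  obtain ⟨P0, hP0, hP0d⟩ := dmenger E2.card E2 le_rfl hloop A B (t - 1) hsepmain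
  have hbuild : ∀ i, ∃ W : G.Walk a b, W.support = a :: (P0 i ++ [b]) ∧ 2 ≤ W.length := by
    intro i
    obtain ⟨hc, hnd, hs, hEnd⟩ := hP0 i
    obtain ⟨u, huA, hh⟩ := hs
    obtain ⟨v', hv'B, hL⟩ := hEnd
    have hcG : (P0 i).Chain' G.Adj := hc.imp (fun {p q} h => ((hE2mem _).mp h).1)
    obtain ⟨p, hpsup⟩ := exists_walk_of_chain' (P0 i) u v' hcG hh hL
    have hadj_au : G.Adj a u := ((hAmem u).mp huA).1
    have hadj_v'b : G.Adj v' b := ((hBmem v').mp hv'B).1.symm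
    have hplen : p.length + 1 = (P0 i).length := by
      have := p.length_support
      rw [hpsup] at this
      omega
    have hne : (P0 i) ≠ [] := starts_ne_nil ⟨u, huA, hh⟩
    refine ⟨SimpleGraph.Walk.cons hadj_au (p.concat hadj_v'b), ?_, ?_⟩
    · rw [SimpleGraph.Walk.support_cons, SimpleGraph.Walk.support_concat, hpsup]
    · rw [SimpleGraph.Walk.length_cons, SimpleGraph.Walk.length_concat]
      omega
  choose W hWsup hWlen using hbuild
  refine ⟨W, fun i => ⟨?_, hWlen i⟩, ?_⟩
  · rw [SimpleGraph.Walk.isPath_def, hWsup i]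
    obtain ⟨hc, hnd, hs, hEnd⟩ := hP0 i
    have hv := hvert (P0 i) hc hs
    rw [List.nodup_cons]
    constructor
    · intro h
      rcases List.mem_append.mp h with h' | h'
      · exact (hv a h').1 rfl
      · exact hab (List.mem_singleton.mp h')
    · refine List.Nodup.append hnd (by simp) ?_
      intro z hz hz'
      rw [List.mem_singleton] at hz'
      exact (hv z hz).2 hz'
  · intro i j hij v hvi hvj
    rw [hWsup i] at hvi
    rw [hWsup j] at hvj
    rcases List.mem_cons.mp hvi with rfl | hvi'
    · exact Or.inl rfl
    rcases List.mem_append.mp hvi' with hvi2 | hvi2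
    swap
    · exact Or.inr (List.mem_singleton.mp hvi2)
    exfalso
    rcases List.mem_cons.mp hvj with rfl | hvj'
    · exact ((hvert (P0 i) (hP0 i).1 (hP0 i).2.2.1) v hvi2).1 rfl
    rcases List.mem_append.mp hvj' with hvj2 | hvj2
    · exact hP0d i j hij v hvi2 hvj2
    · exact ((hvert (P0 i) (hP0 i).1 (hP0 i).2.2.1) v hvi2).2 (List.mem_singleton.mp hvj2)
end
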